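/- arXiv:0803.1860 — 9 statements merged into one kernel-verified Lean document; each statement's English description precedes it below -/
import Mathlib

section
/- If a graph G on n vertices has fewer than (9/8)n edges, then G contains a vertex of degree at most one, or a vertex of degree two both of whose neighbors have degree two. -/
/-!
Suppose every vertex has degree at least two and every vertex of degree two has a neighbour of
degree at least three. Let `S` be the set of degree-two vertices and `D` the degree sum over the
remaining vertices `T`. Each vertex of `S` is a neighbour of some vertex of `T`, so `#S ≤ D`;
also `3 #T ≤ D`. Hence `8 |E| = 8 #S + 4 D ≥ 8 #S + (#S + 9 #T) = 9 n`.
-/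

open Finset

namespace SimpleGraph

variable {V : Type*} (G : SimpleGraph V)

theorem card_le_sum_degree_of_forall_exists_adj [G.LocallyFinite] [DecidableEq V]
    {s t : Finset V} (h : ∀ v ∈ s, ∃ u ∈ t, G.Adj v u) :
    #s ≤ ∑ u ∈ t, G.degree u :=
  calc #s ≤ #(t.biUnion fun u => G.neighborFinset u) := card_le_card fun v hv => by
        obtain ⟨u, hu, hvu⟩ := h v hv
        exact mem_biUnion.2 ⟨u, hu, (G.mem_neighborFinset u v).2 hvu.symm⟩
    _ ≤ ∑ u ∈ t, #(G.neighborFinset u) := card_biUnion_le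
    _ = ∑ u ∈ t, G.degree u := by simp only [card_neighborFinset_eq_degree]

theorem nine_mul_card_le_eight_mul_card_edgeFinset [Fintype V] [DecidableRel G.Adj]
    (hmin : ∀ v, 2 ≤ G.degree v)
    (hdeg_two : ∀ v, G.degree v = 2 → ∃ u, G.Adj v u ∧ G.degree u ≠ 2) :
    9 * Fintype.card V ≤ 8 * #G.edgeFinset := by
  classical
  set S := univ.filter fun v => G.degree v = 2
  set T := univ.filter fun v => G.degree v ≠ 2
  have hcard : #S + #T = Fintype.card V := card_filter_add_card_filter_not _
  have hsum : ∑ v ∈ S, G.degree v + ∑ v ∈ T, G.degree v = 2 * #G.edgeFinset := by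
    rw [sum_filter_add_sum_filter_not, sum_degrees_eq_twice_card_edges]
  have hS : ∑ v ∈ S, G.degree v = 2 * #S := by
    rw [sum_congr rfl fun v hv => (mem_filter.1 hv).2, sum_const, smul_eq_mul, mul_comm]
  have hT : #T * 3 ≤ ∑ v ∈ T, G.degree v :=
    card_nsmul_le_sum T _ 3 fun v hv => by
      have := hmin v
      have := (mem_filter.1 hv).2
      omega
  have hST : #S ≤ ∑ v ∈ T, G.degree v :=
    G.card_le_sum_degree_of_forall_exists_adj fun v hv => by
      obtain ⟨u, hvu, hu⟩ := hdeg_two v (mem_filter.1 hv).2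
      exact ⟨u, mem_filter.2 ⟨mem_univ u, hu⟩, hvu⟩
  omega

end SimpleGraph

/-- If a graph `G` on `n` vertices has fewer than `(9/8)n` edges, then `G` contains a vertex of
degree at most one, or a vertex of degree two both of whose neighbors have degree two. -/
theorem stmt_0 {V : Type*} [Fintype V] (G : SimpleGraph V) [DecidableRel G.Adj]
    (h : 8 * G.edgeFinset.card < 9 * Fintype.card V) :
    (∃ v : V, G.degree v ≤ 1) ∨
      (∃ v : V, G.degree v = 2 ∧ ∀ u ∈ G.neighborFinset v, G.degree u = 2) := by
  by_contra! hc
  obtain ⟨hmin, hdeg_two⟩ := hc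
  have := G.nine_mul_card_le_eight_mul_card_edgeFinset hmin fun v hv => by
    obtain ⟨u, hu, hu_two⟩ := hdeg_two v hv
    exact ⟨u, (G.mem_neighborFinset v u).1 hu, hu_two⟩
  omega
end

section
/- If a graph is (d,Δ)-degenerate, then it is (Δ(d-1)+1)-arrangeable. -/
/-- A graph `G` is `(d,Δ)`-degenerate if there is an ordering `v_1,…,v_n` of its vertices such
that each `v_i` has at most `d` neighbors `v_j` with `j < i`, and there are at most `Δ` distinct
sets `S ⊆ {v_1,…,v_i}` of the form `S = N(v_j) ∩ {v_1,…,v_i}` for some neighbor `v_j` of `v_i`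
with `j > i`. -/
def DDeltaDegenerate {V : Type*} [Fintype V] (G : SimpleGraph V) (d Δ : ℕ) : Prop :=
  ∃ f : Fin (Fintype.card V) ≃ V, ∀ i : Fin (Fintype.card V),
    {j : Fin (Fintype.card V) | j < i ∧ G.Adj (f j) (f i)}.ncard ≤ d ∧
    {S : Set V | ∃ j : Fin (Fintype.card V), i < j ∧ G.Adj (f j) (f i) ∧
        S = {v : V | G.Adj (f j) v ∧ f.symm v ≤ i}}.ncard ≤ Δ

/-- A graph `G` is `p`-arrangeable if there is an ordering `v_1,…,v_n` of its vertices such that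
for each `i`, the neighbors of `v_i` among `{v_{i+1},…,v_n}` have together at most `p`
neighbors in `{v_1,…,v_i}` (including `v_i`). -/
def Arrangeable {V : Type*} [Fintype V] (G : SimpleGraph V) (p : ℕ) : Prop :=
  ∃ f : Fin (Fintype.card V) ≃ V, ∀ i : Fin (Fintype.card V),
    {v : V | f.symm v ≤ i ∧ ∃ j : Fin (Fintype.card V),
        i < j ∧ G.Adj (f i) (f j) ∧ G.Adj (f j) v}.ncard ≤ p

/-!
Use the degeneracy ordering itself. Every vertex counted at `v_i` lies in a trace
`N(v_j) ∩ {v_1,…,v_i}` of some right neighbour `v_j` of `v_i`. There are at most `Δ` such traces;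
each contains `v_i` and, lying among the left neighbours of `v_j`, has at most `d` elements.
So together they contain at most `Δ(d-1)` vertices besides `v_i`.
-/

namespace Set

variable {α : Type*}

lemma ncard_sUnion_le_mul {𝒮 : Set (Set α)} (h𝒮 : 𝒮.Finite) {m : ℕ}
    (hm : ∀ S ∈ 𝒮, S.ncard ≤ m) : (⋃₀ 𝒮).ncard ≤ 𝒮.ncard * m :=
  calc (⋃₀ 𝒮).ncard = (⋃ S ∈ h𝒮.toFinset, S).ncard := by simp [sUnion_eq_biUnion]
    _ ≤ ∑ S ∈ h𝒮.toFinset, S.ncard := Finset.set_ncard_biUnion_le _ _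
    _ ≤ h𝒮.toFinset.card • m := Finset.sum_le_card_nsmul _ _ _ (by simpa using hm)
    _ = 𝒮.ncard * m := by rw [ncard_eq_toFinset_card _ h𝒮, smul_eq_mul]

lemma ncard_sUnion_le_mul_pred_add_one [Finite α] {𝒮 : Set (Set α)} (h𝒮 : 𝒮.Finite)
    {x : α} {d : ℕ} (hx : ∀ S ∈ 𝒮, x ∈ S) (hd : ∀ S ∈ 𝒮, S.ncard ≤ d) :
    (⋃₀ 𝒮).ncard ≤ 𝒮.ncard * (d - 1) + 1 := by
  have hcover : ⋃₀ 𝒮 ⊆ insert x (⋃₀ ((· \ {x}) '' 𝒮)) := by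
    rintro v ⟨S, hS, hv⟩
    by_cases hvx : v = x
    · exact hvx ▸ mem_insert v _
    · exact mem_insert_of_mem x ⟨S \ {x}, mem_image_of_mem _ hS, hv, hvx⟩
  have hpunctured : ∀ T ∈ (· \ {x}) '' 𝒮, T.ncard ≤ d - 1 := by
    rintro _ ⟨S, hS, rfl⟩
    rw [ncard_sdiff_singleton_of_mem (hx S hS)]
    exact Nat.sub_le_sub_right (hd S hS) 1
  calc (⋃₀ 𝒮).ncard ≤ (insert x (⋃₀ ((· \ {x}) '' 𝒮))).ncard := ncard_le_ncard hcover
    _ ≤ (⋃₀ ((· \ {x}) '' 𝒮)).ncard + 1 := ncard_insert_le _ _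
    _ ≤ ((· \ {x}) '' 𝒮).ncard * (d - 1) + 1 :=
      Nat.add_le_add_right (ncard_sUnion_le_mul (h𝒮.image _) hpunctured) 1
    _ ≤ 𝒮.ncard * (d - 1) + 1 :=
      Nat.add_le_add_right (Nat.mul_le_mul_right _ (ncard_image_le h𝒮)) 1

end Set

namespace SimpleGraph

variable {V ι : Type*} [LinearOrder ι] (G : SimpleGraph V) (f : ι ≃ V)

lemma ncard_adj_le_ncard_adj_lt [Finite ι] {i j : ι} (hij : i < j) :
    {v | G.Adj (f j) v ∧ f.symm v ≤ i}.ncard ≤ {k | k < j ∧ G.Adj (f k) (f j)}.ncard := by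
  rw [← Set.ncard_image_of_injective _ f.symm.injective]
  refine Set.ncard_le_ncard ?_
  rintro k ⟨v, ⟨hadj, hvi⟩, rfl⟩
  exact ⟨hvi.trans_lt hij, by simpa using hadj.symm⟩

lemma adj_adj_subset_sUnion (i : ι) :
    {v | f.symm v ≤ i ∧ ∃ j, i < j ∧ G.Adj (f i) (f j) ∧ G.Adj (f j) v} ⊆
      ⋃₀ {S | ∃ j, i < j ∧ G.Adj (f j) (f i) ∧ S = {v | G.Adj (f j) v ∧ f.symm v ≤ i}} := by
  rintro v ⟨hvi, j, hij, hadj, hjv⟩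
  exact ⟨_, ⟨j, hij, hadj.symm, rfl⟩, hjv, hvi⟩

end SimpleGraph

/-- If a graph is `(d,Δ)`-degenerate, then it is `(Δ(d-1)+1)`-arrangeable. -/
theorem stmt_2 {V : Type*} [Fintype V] (G : SimpleGraph V) (d Δ : ℕ)
    (h : DDeltaDegenerate G d Δ) : Arrangeable G (Δ * (d - 1) + 1) := by
  obtain ⟨f, hf⟩ := h
  refine ⟨f, fun i => ?_⟩
  set 𝒮 := {S | ∃ j, i < j ∧ G.Adj (f j) (f i) ∧ S = {v | G.Adj (f j) v ∧ f.symm v ≤ i}}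
  have hmem : ∀ S ∈ 𝒮, f i ∈ S := by
    rintro _ ⟨j, -, hadj, rfl⟩
    exact ⟨hadj, by simp⟩
  have hsize : ∀ S ∈ 𝒮, S.ncard ≤ d := by
    rintro _ ⟨j, hij, -, rfl⟩
    exact (G.ncard_adj_le_ncard_adj_lt f hij).trans (hf j).1
  calc _ ≤ _ := Set.ncard_le_ncard (G.adj_adj_subset_sUnion f i)
    _ ≤ _ := Set.ncard_sUnion_le_mul_pred_add_one (Set.toFinite _) hmem hsize
    _ ≤ Δ * (d - 1) + 1 := by gcongr; exact (hf i).2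
end

section
/- If a graph is p-arrangeable, then it is (p, 2^{p-1})-degenerate. -/
theorem Set.ncard_le_two_pow_of_forall_mem_of_subset {α : Type*} {a : α} {B : Set α}
    (hB : B.Finite) {T : Set (Set α)} (hT : ∀ S ∈ T, a ∈ S ∧ S ⊆ B) :
    T.ncard ≤ 2 ^ (B.ncard - 1) := by
  by_cases ha : a ∈ B
  · have hT_sub : T ⊆ insert a '' 𝒫 (B \ {a}) := fun S hS =>
      ⟨S \ {a}, Set.sdiff_subset_sdiff_left (hT S hS).2,
        by rw [Set.insert_sdiff_singleton, Set.insert_eq_of_mem (hT S hS).1]⟩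
    have hfin : (𝒫 (B \ {a})).Finite := hB.sdiff.powerset
    calc T.ncard ≤ (insert a '' 𝒫 (B \ {a})).ncard := Set.ncard_le_ncard hT_sub (hfin.image _)
      _ ≤ (𝒫 (B \ {a})).ncard := Set.ncard_image_le hfin
      _ = 2 ^ (B.ncard - 1) := by
        rw [Set.ncard_powerset _ hB.sdiff, Set.ncard_sdiff_singleton_of_mem ha]
  · have hT_empty : T = ∅ :=
      Set.eq_empty_of_forall_notMem fun S hS => ha ((hT S hS).2 (hT S hS).1)
    simp [hT_empty]

section Arrangement

variable {V : Type*} [Fintype V] (G : SimpleGraph V) (f : Fin (Fintype.card V) ≃ V)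

def backReach (i : Fin (Fintype.card V)) : Set V :=
  {v | f.symm v ≤ i ∧ ∃ j, i < j ∧ G.Adj (f i) (f j) ∧ G.Adj (f j) v}

variable {G f} {p : ℕ}

theorem ncard_earlierNeighbors_le_of_backReach (hf : ∀ i, (backReach G f i).ncard ≤ p)
    (i : Fin (Fintype.card V)) : {j | j < i ∧ G.Adj (f j) (f i)}.ncard ≤ p := by
  set A := {j | j < i ∧ G.Adj (f j) (f i)}
  rcases A.eq_empty_or_nonempty with hA | hA
  · simp [hA]
  obtain ⟨k, hkA, hk_max⟩ := Set.exists_max_image A id A.toFinite hA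
  have hmaps : ∀ j ∈ A, f j ∈ backReach G f k :=
    fun j hj => ⟨by simpa using hk_max j hj, i, hkA.1, hkA.2, hj.2.symm⟩
  exact (Set.ncard_le_ncard_of_injOn f hmaps f.injective.injOn).trans (hf k)

theorem ncard_traces_le_of_backReach (hf : ∀ i, (backReach G f i).ncard ≤ p)
    (i : Fin (Fintype.card V)) :
    {S : Set V | ∃ j, i < j ∧ G.Adj (f j) (f i) ∧
      S = {v : V | G.Adj (f j) v ∧ f.symm v ≤ i}}.ncard ≤ 2 ^ (p - 1) := by
  refine (Set.ncard_le_two_pow_of_forall_mem_of_subset (a := f i) (Set.toFinite (backReach G f i))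
    ?_).trans (Nat.pow_le_pow_right two_pos (Nat.sub_le_sub_right (hf i) 1))
  rintro S ⟨j, hij, hadj, rfl⟩
  exact ⟨⟨hadj, by simp⟩, fun v hv => ⟨hv.2, j, hij, hadj.symm, hv.1⟩⟩

end Arrangement

/-- If a graph is `p`-arrangeable, then it is `(p, 2^{p-1})`-degenerate. -/
theorem stmt_3 {V : Type*} [Fintype V] (G : SimpleGraph V) (p : ℕ)
    (h : Arrangeable G p) : DDeltaDegenerate G p (2 ^ (p - 1)) := by
  obtain ⟨f, hf⟩ := h
  exact ⟨f, fun i => ⟨ncard_earlierNeighbors_le_of_backReach hf i,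
    ncard_traces_le_of_backReach hf i⟩⟩
end

section
/- Let H be a d-degenerate graph with n vertices and chromatic number at most q. Let G be a graph with pairwise disjoint vertex subsets Y_1,...,Y_q, all of equal size at least 4n, such that each vertex in Y_i is adjacent to all but at most |Y_i|/(2d) of the vertices of the union of the Y_j with j ≠ i. Then H is a subgraph of G. -/
/-!
Greedy embedding along a degeneracy order. Every nonempty `s ⊆ V(H)` has a vertex `v` with at
most `d` neighbours in `s`; embed `s \ {v}` first, each vertex into the part indexed by its
colour, and then place `v` in its own part `Y (C v)`. There fewer than `n` points are already
taken, and each of the at most `d` embedded neighbours of `v` lies in a different part, so it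
misses at most `m / (2d)` points of `Y (C v)`: fewer than `n + m / 2 ≤ m` points are excluded.
-/

/-- A graph is `d`-degenerate if every nonempty (induced) subgraph has a vertex of degree
at most `d`. -/
def DDegenerate {V : Type*} (G : SimpleGraph V) (d : ℕ) : Prop :=
  ∀ s : Finset V, s.Nonempty → ∃ v ∈ s, {u : V | u ∈ s ∧ G.Adj v u}.ncard ≤ d

open Finset SimpleGraph

theorem Finset.exists_mem_notMem_of_card_add_sum_lt {α β : Type*} [DecidableEq α]
    {Y A : Finset α} {N : Finset β} (B : β → Finset α)
    (h : #A + ∑ u ∈ N, #(B u) < #Y) : ∃ y ∈ Y, y ∉ A ∧ ∀ u ∈ N, y ∉ B u := by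
  by_contra! hcon
  have hcover : Y ⊆ A ∪ N.biUnion B := fun y hy => by
    by_cases hyA : y ∈ A
    · exact mem_union_left _ hyA
    · obtain ⟨u, hu, hyu⟩ := hcon y hy hyA
      exact mem_union_right _ (mem_biUnion.mpr ⟨u, hu, hyu⟩)
  have := (card_le_card hcover).trans
    ((card_union_le _ _).trans (Nat.add_le_add_left card_biUnion_le _))
  omega

theorem Finset.sum_le_of_card_le_of_mul_le {β : Type*} {N : Finset β} {f : β → ℕ} {d b : ℕ}
    (hN : #N ≤ d) (hf : ∀ u ∈ N, d * f u ≤ b) : ∑ u ∈ N, f u ≤ b := by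
  rcases d.eq_zero_or_pos with rfl | hd
  · simp [card_eq_zero.mp (Nat.le_zero.mp hN)]
  refine Nat.le_of_mul_le_mul_left ?_ hd
  calc d * ∑ u ∈ N, f u = ∑ u ∈ N, d * f u := mul_sum _ _ _
    _ ≤ #N * b := by simpa using sum_le_sum hf
    _ ≤ d * b := by gcongr

theorem DDegenerate.exists_mem_card_filter_adj_le {W : Type*} {H : SimpleGraph W} {d : ℕ}
    [DecidableRel H.Adj] (hH : DDegenerate H d) {s : Finset W} (hs : s.Nonempty) :
    ∃ v ∈ s, #{u ∈ s | H.Adj v u} ≤ d := by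
  obtain ⟨v, hv, hdeg⟩ := hH s hs
  refine ⟨v, hv, ?_⟩
  rwa [← Set.ncard_coe_finset, coe_filter]

namespace SimpleGraph

variable {W V ι : Type*} (G : SimpleGraph V) {H : SimpleGraph W}

def IsColoredEmbeddingOn (C : H.Coloring ι) (Y : ι → Finset V) (s : Finset W) (f : W → V) :
    Prop :=
  Set.InjOn f s ∧ (∀ a ∈ s, f a ∈ Y (C a)) ∧ ∀ a ∈ s, ∀ b ∈ s, H.Adj a b → G.Adj (f a) (f b)

variable {G}

theorem isColoredEmbeddingOn_empty {C : H.Coloring ι} {Y : ι → Finset V} (f : W → V) :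
    G.IsColoredEmbeddingOn C Y ∅ f := by
  simp [IsColoredEmbeddingOn]

theorem IsColoredEmbeddingOn.update_insert [DecidableEq W] {C : H.Coloring ι}
    {Y : ι → Finset V} {s : Finset W} {f : W → V}
    (hf : G.IsColoredEmbeddingOn C Y s f) {v : W} (hv : v ∉ s) {w : V} (hwY : w ∈ Y (C v))
    (hwf : w ∉ f '' s) (hwG : ∀ u ∈ s, H.Adj v u → G.Adj w (f u)) :
    G.IsColoredEmbeddingOn C Y (insert v s) (Function.update f v w) := by
  obtain ⟨hinj, hmem, hadj⟩ := hf
  have heq : Set.EqOn f (Function.update f v w) s := fun u hu =>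
    (Function.update_of_ne (ne_of_mem_of_not_mem hu hv) _ _).symm
  refine ⟨?_, ?_, ?_⟩
  · rw [coe_insert, Set.injOn_insert (by simpa using hv), ← heq.image_eq]
    exact ⟨hinj.congr heq, by simpa using hwf⟩
  · rw [forall_mem_insert, Function.update_self]
    exact ⟨hwY, fun a ha => heq ha ▸ hmem a ha⟩
  · simp only [forall_mem_insert, Function.update_self]
    refine ⟨⟨fun h => (H.irrefl h).elim, fun b hb h => ?_⟩,
      fun a ha => ⟨fun h => ?_, fun b hb h => ?_⟩⟩
    · rw [← heq hb]; exact hwG b hb h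
    · rw [← heq ha]; exact (hwG a ha h.symm).symm
    · rw [← heq ha, ← heq hb]; exact hadj a ha b hb h

end SimpleGraph

section

variable {W V ι : Type*} {H : SimpleGraph W} {G : SimpleGraph V} [DecidableRel G.Adj] {d b : ℕ}

theorem DDegenerate.exists_isColoredEmbeddingOn [Nonempty V] (hH : DDegenerate H d)
    (C : H.Coloring ι) (Y : ι → Finset V)
    (hbad : ∀ i j, i ≠ j → ∀ x ∈ Y i, d * #{y ∈ Y j | ¬ G.Adj x y} ≤ b) (s : Finset W)
    (hroom : ∀ i, #s + b ≤ #(Y i)) : ∃ f, G.IsColoredEmbeddingOn C Y s f := by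
  classical
  induction s using Finset.strongInduction with
  | H s ih =>
  rcases s.eq_empty_or_nonempty with rfl | hs
  · exact ⟨fun _ => Classical.arbitrary V, isColoredEmbeddingOn_empty _⟩
  obtain ⟨v, hvs, hdeg⟩ := hH.exists_mem_card_filter_adj_le hs
  obtain ⟨f, hf⟩ := ih (s.erase v) (erase_ssubset hvs) fun i =>
    (Nat.add_le_add_right card_erase_le _).trans (hroom i)
  set N := {u ∈ s.erase v | H.Adj v u}
  have hNd : #N ≤ d := (card_le_card (filter_subset_filter _ (erase_subset v s))).trans hdeg
  have hNbad : ∑ u ∈ N, #{y ∈ Y (C v) | ¬ G.Adj (f u) y} ≤ b :=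
    sum_le_of_card_le_of_mul_le hNd fun u hu =>
      hbad _ _ (C.valid (mem_filter.1 hu).2).symm _ (hf.2.1 u (mem_filter.1 hu).1)
  have hfree : #((s.erase v).image f) + ∑ u ∈ N, #{y ∈ Y (C v) | ¬ G.Adj (f u) y} <
      #(Y (C v)) := by
    have := card_image_le (f := f) (s := s.erase v)
    have := card_erase_lt_of_mem hvs
    have := hroom (C v)
    omega
  obtain ⟨w, hwY, hwf, hwN⟩ := exists_mem_notMem_of_card_add_sum_lt _ hfree
  have hext := hf.update_insert (notMem_erase v s) hwY (by rwa [← coe_image])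
    fun u hu huv => G.adj_symm (by simpa [hwY] using hwN u (mem_filter.2 ⟨hu, huv⟩))
  rw [insert_erase hvs] at hext
  exact ⟨_, hext⟩

theorem DDegenerate.isContained [Fintype W] (hH : DDegenerate H d) (C : H.Coloring ι)
    (Y : ι → Finset V) (hbad : ∀ i j, i ≠ j → ∀ x ∈ Y i, d * #{y ∈ Y j | ¬ G.Adj x y} ≤ b)
    (hroom : ∀ i, Fintype.card W + b ≤ #(Y i)) : H ⊑ G := by
  cases isEmpty_or_nonempty W
  · exact .of_isEmpty
  have : Nonempty V := by
    obtain ⟨y, -⟩ := card_pos.1 ((Fintype.card_pos.trans_le (Nat.le_add_right _ b)).trans_le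
      (hroom (C (Classical.arbitrary W))))
    exact ⟨y⟩
  obtain ⟨f, hinj, -, hadj⟩ := hH.exists_isColoredEmbeddingOn C Y hbad univ (by simpa using hroom)
  exact ⟨⟨⟨f, fun h => hadj _ (mem_univ _) _ (mem_univ _) h⟩, by simpa using hinj⟩⟩

end

theorem stmt_8_general {W V : Type*} [Fintype W]
    (H : SimpleGraph W) (G : SimpleGraph V) (d q n m : ℕ)
    (hn : Fintype.card W = n) (hH : DDegenerate H d) (hchr : H.chromaticNumber ≤ (q : ℕ∞))
    (Y : Fin q → Finset V)
    (hsize : ∀ i, (Y i).card = m) (hm : 4 * n ≤ m)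
    (hadj : ∀ i, ∀ v ∈ Y i,
      2 * d * {u : V | (∃ j, j ≠ i ∧ u ∈ Y j) ∧ ¬ G.Adj v u}.ncard ≤ m) :
    ∃ f : W ↪ V, ∀ a b : W, H.Adj a b → G.Adj (f a) (f b) := by
  classical
  obtain ⟨C⟩ := SimpleGraph.chromaticNumber_le_iff_colorable.mp hchr
  have hbad : ∀ i j, i ≠ j → ∀ x ∈ Y i, d * #{y ∈ Y j | ¬ G.Adj x y} ≤ m / 2 := by
    intro i j hij x hx
    have hsub : ↑({y ∈ Y j | ¬ G.Adj x y} : Finset V) ⊆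
        {u : V | (∃ j, j ≠ i ∧ u ∈ Y j) ∧ ¬ G.Adj x u} :=
      fun y hy => ⟨⟨j, hij.symm, (mem_filter.1 hy).1⟩, (mem_filter.1 hy).2⟩
    have hfin : {u : V | (∃ j, j ≠ i ∧ u ∈ Y j) ∧ ¬ G.Adj x u}.Finite :=
      (Set.finite_iUnion fun j => (Y j).finite_toSet).subset fun u hu => by
        obtain ⟨⟨j, -, hj⟩, -⟩ := hu
        exact Set.mem_iUnion.2 ⟨j, hj⟩
    have hle := Set.ncard_le_ncard hsub hfin
    rw [Set.ncard_coe_finset] at hle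
    have := hadj i x hx
    rw [Nat.le_div_iff_mul_le two_pos]
    nlinarith
  obtain ⟨c⟩ := hH.isContained C Y hbad fun i => by rw [hsize, hn]; omega
  exact ⟨c.toEmbedding, fun a b h => c.toHom.map_adj h⟩

/-- Let `H` be a `d`-degenerate graph with `n` vertices and chromatic number at most `q`. Let `G`
be a graph with pairwise disjoint vertex subsets `Y_1,…,Y_q`, all of equal size at least `4n`,
such that each vertex in `Y_i` is adjacent to all but at most `|Y_i|/(2d)` of the vertices of
`⋃_{j ≠ i} Y_j`. Then `H` is a subgraph of `G`. -/
theorem stmt_8 {W V : Type*} [Fintype W] [Fintype V]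
    (H : SimpleGraph W) (G : SimpleGraph V) (d q n m : ℕ)
    (hn : Fintype.card W = n) (hH : DDegenerate H d) (hchr : H.chromaticNumber ≤ (q : ℕ∞))
    (Y : Fin q → Finset V) (hdisj : Pairwise (Function.onFun Disjoint Y))
    (hsize : ∀ i, (Y i).card = m) (hm : 4 * n ≤ m)
    (hadj : ∀ i, ∀ v ∈ Y i,
      2 * d * {u : V | (∃ j, j ≠ i ∧ u ∈ Y j) ∧ ¬ G.Adj v u}.ncard ≤ m) :
    ∃ f : W ↪ V, ∀ a b : W, H.Adj a b → G.Adj (f a) (f b) :=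
  stmt_8_general H G d q n m hn hH hchr Y hsize hm hadj
end

section
/- Let ε > 0 and let G = (V_1, V_2; E) be a bipartite graph with |V_1| = |V_2| = N and at least εN² edges. Then for all positive integers t and x, there exists a subset A ⊆ V_2 with |A| ≥ ε^{2t} N / 2 such that the number of t-element subsets S of A whose common neighborhood (in V_1) has size less than x is at most 2 ε^{-2t} (x/N)^{2t} · C(N, t). -/
/-! Dependent random choice. For a uniformly random tuple `T ∈ V₁^{2t}` let `A` be the common
neighbourhood of its entries in `V₂`. Double counting and Jensen give
`E|A| = Σ_u deg(u)^{2t} / N^{2t} ≥ ε^{2t} N`, and a `t`-set `S` lies in `A` with probability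
`(|N(S)|/N)^{2t}`, so the expected number of `t`-sets in `A` with fewer than `x` common neighbours
is at most `C(N,t) (x/N)^{2t}`. A tuple on which `|A|` minus a suitable multiple of that number
is at least its mean satisfies both bounds. -/

open Finset

lemma card_mul_pow_sum_div_card_le_sum_pow {ι : Type*} (s : Finset ι) {f : ι → ℝ}
    (hf : ∀ i ∈ s, 0 ≤ f i) (n : ℕ) :
    #s * ((∑ i ∈ s, f i) / #s) ^ n ≤ ∑ i ∈ s, f i ^ n := by
  obtain rfl | hs := s.eq_empty_or_nonempty
  · simp
  have hcard : (0 : ℝ) < #s := by exact_mod_cast hs.card_pos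
  have hjensen := Real.pow_arith_mean_le_arith_mean_pow s (fun _ => (#s : ℝ)⁻¹) f
    (fun _ _ => by positivity) (by simp [hcard.ne']) hf n
  rwa [← mul_sum, ← mul_sum, inv_mul_eq_div, inv_mul_eq_div, le_div_iff₀' hcard] at hjensen

lemma exists_half_le_and_le_of_sum {ι : Type*} [Fintype ι] [Nonempty ι] {a y : ι → ℝ}
    {α γ M : ℝ} (hα : 0 < α) (hγ : 0 ≤ γ) (hy : ∀ i, 0 ≤ y i) (haM : ∀ i, a i ≤ M)
    (hsum_a : Fintype.card ι * α ≤ ∑ i, a i) (hsum_y : ∑ i, y i ≤ Fintype.card ι * γ) :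
    ∃ i, α / 2 ≤ a i ∧ y i ≤ 2 * γ * M / α := by
  rcases hγ.eq_or_lt with rfl | hγ
  · obtain ⟨i, -, hi⟩ := exists_le_of_sum_le univ_nonempty
      (f := fun _ => α) (g := a) (by simpa using hsum_a)
    have hy0 : y i = 0 :=
      (sum_eq_zero_iff_of_nonneg fun j _ => hy j).1
        (le_antisymm (by simpa using hsum_y) (sum_nonneg fun j _ => hy j)) i (mem_univ i)
    exact ⟨i, by linarith, by simp [hy0]⟩
  obtain ⟨i, -, hi⟩ := exists_le_of_sum_le univ_nonempty
    (f := fun _ => α * γ) (g := fun i => 2 * γ * a i - α * y i) (by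
      simp only [sum_const, card_univ, nsmul_eq_mul, sum_sub_distrib, ← mul_sum]
      nlinarith)
  have hαy : 0 ≤ α * y i := mul_nonneg hα.le (hy i)
  refine ⟨i, by nlinarith, ?_⟩
  rw [le_div_iff₀ hα]
  nlinarith [haM i]

section CommonNeighborhood

variable {V₁ V₂ : Type*} [Fintype V₁] [Fintype V₂] [DecidableEq V₂]
    (E : V₁ → V₂ → Prop) [DecidableRel E]

def commonNbhd (S : Finset V₂) : Finset V₁ := {v | ∀ u ∈ S, E v u}

def tupleCommonNbhd {n : ℕ} (T : Fin n → V₁) : Finset V₂ := {u | ∀ i, E (T i) u}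

def smallCommonNbhdSets (t x : ℕ) : Finset (Finset V₂) := {S | #S = t ∧ #(commonNbhd E S) < x}

lemma card_filter_subset_tupleCommonNbhd (n : ℕ) (S : Finset V₂) :
    #{T : Fin n → V₁ | S ⊆ tupleCommonNbhd E T} = #(commonNbhd E S) ^ n := by
  have : ({T : Fin n → V₁ | S ⊆ tupleCommonNbhd E T} : Finset _) =
      Fintype.piFinset fun _ => commonNbhd E S := by
    ext T
    simp only [mem_filter, mem_univ, true_and, Fintype.mem_piFinset, subset_iff,
      tupleCommonNbhd, commonNbhd]
    exact ⟨fun h i u hu => h hu i, fun h u hu i => h i u hu⟩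
  simp [this]

lemma sum_card_filter_subset_tupleCommonNbhd (n : ℕ) (𝒮 : Finset (Finset V₂)) :
    ∑ T : Fin n → V₁, #{S ∈ 𝒮 | S ⊆ tupleCommonNbhd E T} = ∑ S ∈ 𝒮, #(commonNbhd E S) ^ n := by
  rw [← sum_congr rfl fun S _ => card_filter_subset_tupleCommonNbhd E n S]
  exact sum_card_bipartiteAbove_eq_sum_card_bipartiteBelow _

lemma sum_card_tupleCommonNbhd (n : ℕ) :
    ∑ T : Fin n → V₁, #(tupleCommonNbhd E T) = ∑ u, #(commonNbhd E {u}) ^ n := by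
  simp_rw [← card_filter_subset_tupleCommonNbhd, singleton_subset_iff]
  simpa only [bipartiteAbove, bipartiteBelow, filter_univ_mem] using
    sum_card_bipartiteAbove_eq_sum_card_bipartiteBelow (fun T u => u ∈ tupleCommonNbhd E T)
      (s := (univ : Finset (Fin n → V₁))) (t := univ)

lemma sum_card_commonNbhd_singleton :
    ∑ u, #(commonNbhd E {u}) = #{p : V₁ × V₂ | E p.1 p.2} := by
  rw [card_filter, Fintype.sum_prod_type, sum_comm]
  exact sum_congr rfl fun u _ => by simp only [commonNbhd, mem_singleton, forall_eq, card_filter]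

lemma pow_mul_le_sum_card_tupleCommonNbhd [Nonempty V₂] {ε : ℝ} (hε : 0 ≤ ε)
    (hE : ε * Fintype.card V₁ * Fintype.card V₂ ≤ #{p : V₁ × V₂ | E p.1 p.2}) (n : ℕ) :
    (Fintype.card V₁ : ℝ) ^ n * (ε ^ n * Fintype.card V₂) ≤
      ∑ T : Fin n → V₁, (#(tupleCommonNbhd E T) : ℝ) := by
  have hV₂ : (0 : ℝ) < Fintype.card V₂ := by exact_mod_cast Fintype.card_pos
  have havg : ε * Fintype.card V₁ ≤ (∑ u, (#(commonNbhd E {u}) : ℝ)) / Fintype.card V₂ := by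
    rw [le_div_iff₀ hV₂]
    exact_mod_cast sum_card_commonNbhd_singleton E ▸ hE
  calc (Fintype.card V₁ : ℝ) ^ n * (ε ^ n * Fintype.card V₂)
      = Fintype.card V₂ * (ε * Fintype.card V₁) ^ n := by ring
    _ ≤ Fintype.card V₂ * ((∑ u, (#(commonNbhd E {u}) : ℝ)) / Fintype.card V₂) ^ n := by
      gcongr
    _ ≤ ∑ u, (#(commonNbhd E {u}) : ℝ) ^ n :=
      card_mul_pow_sum_div_card_le_sum_pow univ (fun _ _ => by positivity) n
    _ = ∑ T : Fin n → V₁, (#(tupleCommonNbhd E T) : ℝ) := by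
      exact_mod_cast (sum_card_tupleCommonNbhd E n).symm

lemma card_smallCommonNbhdSets_le (t x : ℕ) :
    #(smallCommonNbhdSets E t x) ≤ (Fintype.card V₂).choose t := by
  rw [← card_univ, ← card_powersetCard]
  exact card_le_card fun S hS => mem_powersetCard.2 ⟨subset_univ S, (mem_filter.1 hS).2.1⟩

lemma sum_card_smallCommonNbhdSets_subset_le (n t x : ℕ) :
    ∑ T : Fin n → V₁, #{S ∈ smallCommonNbhdSets E t x | S ⊆ tupleCommonNbhd E T} ≤
      (Fintype.card V₂).choose t * x ^ n := by
  rw [sum_card_filter_subset_tupleCommonNbhd]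
  calc ∑ S ∈ smallCommonNbhdSets E t x, #(commonNbhd E S) ^ n
      ≤ ∑ _S ∈ smallCommonNbhdSets E t x, x ^ n :=
        sum_le_sum fun S hS => Nat.pow_le_pow_left (mem_filter.1 hS).2.2.le n
    _ ≤ (Fintype.card V₂).choose t * x ^ n := by
      rw [sum_const, smul_eq_mul]
      exact Nat.mul_le_mul_right _ (card_smallCommonNbhdSets_le E t x)

lemma ncard_setOf_small_commonNbhd_subset (A : Finset V₂) (t x : ℕ) :
    {S : Finset V₂ | S ⊆ A ∧ S.card = t ∧ {v : V₁ | ∀ u ∈ S, E v u}.ncard < x}.ncard =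
      #{S ∈ smallCommonNbhdSets E t x | S ⊆ A} := by
  have hcommon (S : Finset V₂) : {v : V₁ | ∀ u ∈ S, E v u}.ncard = #(commonNbhd E S) := by
    rw [← Set.ncard_coe_finset, commonNbhd, coe_filter]; simp
  rw [← Set.ncard_coe_finset, coe_filter]
  congr 1; ext S
  simp only [hcommon, Set.mem_ofPred_eq, smallCommonNbhdSets, mem_filter, mem_univ, true_and]
  tauto

end CommonNeighborhood

theorem stmt_9_general {V₁ V₂ : Type*} [Fintype V₁] [Fintype V₂] (E : V₁ → V₂ → Prop) (N : ℕ)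
    (h1 : Fintype.card V₁ = N) (h2 : Fintype.card V₂ = N) (ε : ℝ) (hε : 0 < ε)
    (hE : ε * (N : ℝ) ^ 2 ≤ ({p : V₁ × V₂ | E p.1 p.2}.ncard : ℝ))
    (t x : ℕ) :
    ∃ A : Finset V₂, ε ^ (2 * t) * N / 2 ≤ (A.card : ℝ) ∧
      (({S : Finset V₂ | S ⊆ A ∧ S.card = t ∧
          {v : V₁ | ∀ u ∈ S, E v u}.ncard < x}.ncard : ℝ)) ≤
        2 * ε⁻¹ ^ (2 * t) * ((x : ℝ) / N) ^ (2 * t) * (N.choose t) := by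
  classical
  simp_rw [ncard_setOf_small_commonNbhd_subset]
  rcases N.eq_zero_or_pos with rfl | hN
  · refine ⟨∅, by simp, ?_⟩
    have hsmall := card_smallCommonNbhdSets_le E t x
    rw [h2] at hsmall
    calc (#{S ∈ smallCommonNbhdSets E t x | S ⊆ ∅} : ℝ) ≤ (Nat.choose 0 t : ℝ) := by
          exact_mod_cast (card_filter_le _ _).trans hsmall
      _ ≤ _ := by cases t <;> simp
  have : Nonempty V₂ := Fintype.card_pos_iff.1 (h2 ▸ hN)
  have : Nonempty V₁ := Fintype.card_pos_iff.1 (h1 ▸ hN)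
  have hN' : (0 : ℝ) < N := by exact_mod_cast hN
  have hE' : ε * Fintype.card V₁ * Fintype.card V₂ ≤ #{p : V₁ × V₂ | E p.1 p.2} := by
    rw [h1, h2, mul_assoc, ← sq, ← Set.ncard_coe_finset, coe_filter]
    simpa using hE
  have hsmall : ∑ T : Fin (2 * t) → V₁,
      (#{S ∈ smallCommonNbhdSets E t x | S ⊆ tupleCommonNbhd E T} : ℝ) ≤
        Fintype.card (Fin (2 * t) → V₁) * (N.choose t * ((x : ℝ) / N) ^ (2 * t)) := by
    have hcancel : (N : ℝ) ^ (2 * t) * (N.choose t * ((x : ℝ) / N) ^ (2 * t)) =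
        N.choose t * (x : ℝ) ^ (2 * t) := by
      rw [div_pow]
      field_simp
    rw [Fintype.card_fun, Fintype.card_fin, h1, Nat.cast_pow, hcancel]
    exact_mod_cast h2 ▸ sum_card_smallCommonNbhdSets_subset_le E (2 * t) t x
  obtain ⟨T, hlarge, hfew⟩ := exists_half_le_and_le_of_sum
    (a := fun T => (#(tupleCommonNbhd E T) : ℝ)) (M := N)
    (by positivity : 0 < ε ^ (2 * t) * N) (by positivity) (fun _ => by positivity)
    (fun T => by exact_mod_cast h2 ▸ card_le_univ (tupleCommonNbhd E T))
    (by simpa [h1, h2] using pow_mul_le_sum_card_tupleCommonNbhd E hε.le hE' (2 * t)) hsmall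
  refine ⟨tupleCommonNbhd E T, hlarge, hfew.trans_eq ?_⟩
  rw [inv_pow, div_pow]
  field_simp

/-- Dependent random choice lemma: if `G = (V₁, V₂; E)` is a bipartite graph with
`|V₁| = |V₂| = N` and at least `ε N²` edges, then for all positive integers `t, x` there is
`A ⊆ V₂` with `|A| ≥ ε^{2t} N / 2` such that the number of `t`-element subsets `S` of `A` whose
common neighborhood has fewer than `x` elements is at most `2 ε^{-2t} (x/N)^{2t} C(N,t)`. -/
theorem stmt_9 {V₁ V₂ : Type*} [Fintype V₁] [Fintype V₂] (E : V₁ → V₂ → Prop) (N : ℕ)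
    (h1 : Fintype.card V₁ = N) (h2 : Fintype.card V₂ = N) (ε : ℝ) (hε : 0 < ε)
    (hE : ε * (N : ℝ) ^ 2 ≤ ({p : V₁ × V₂ | E p.1 p.2}.ncard : ℝ))
    (t x : ℕ) (ht : 0 < t) (hx : 0 < x) :
    ∃ A : Finset V₂, ε ^ (2 * t) * N / 2 ≤ (A.card : ℝ) ∧
      (({S : Finset V₂ | S ⊆ A ∧ S.card = t ∧
          {v : V₁ | ∀ u ∈ S, E v u}.ncard < x}.ncard : ℝ)) ≤
        2 * ε⁻¹ ^ (2 * t) * ((x : ℝ) / N) ^ (2 * t) * (N.choose t) :=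
  stmt_9_general E N h1 h2 ε hε hE t x
end

section
/- Let H be a (d,Δ)-degenerate graph with n vertices and chromatic number at most q. Let G be a graph with vertex subsets V_1,...,V_q such that for each i, |V_i| ≥ x ≥ 4n and the number of d-element subsets S of the union of V_ℓ over ℓ ≠ i with fewer than x common neighbors in V_i is less than (2Δ)^{-d} · C(x, d). Then G contains a copy of H. -/
/-!
Embed the vertices of `H` one at a time along the degeneracy order, each vertex `v` into the part
`V_{c(v)}` of a proper colouring `c` of `H` with at most `d + 1` colours (a greedy colouring along
the order, if `q` is larger). A vertex goes to a common neighbour of the images of its earlier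
neighbours; there are at least `x` of these as long as few bad `d`-sets contain those images.
So for every later vertex we keep the number of bad `d`-sets through the images of its embedded
neighbours under a budget that starts at `d C(x,d) / (2Δ)^d` and shrinks by `4Δ(d-e)/(3x)` with the
`(e+1)`-st embedded neighbour; it never exceeds `C(x-e, d-e)`. By double counting, fewer than
`3x/(4Δ)` candidates overshoot the budget of a given set of later neighbours, there are at most `Δ`
such sets, and at most `n ≤ x/4` vertices are used already, so a good candidate remains.
-/

open Finset Nat

lemma mul_two_pow_le_three_pow (d : ℕ) : d * 2 ^ d ≤ 3 ^ d := by
  induction d with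
  | zero => simp
  | succ d ih =>
    rcases Nat.lt_or_ge d 2 with h | h
    · interval_cases d <;> norm_num
    · calc (d + 1) * 2 ^ (d + 1) = 2 * (d + 1) * 2 ^ d := by ring
        _ ≤ 3 * d * 2 ^ d := Nat.mul_le_mul_right _ (by omega)
        _ ≤ 3 * 3 ^ d := by rw [mul_assoc]; gcongr
        _ = 3 ^ (d + 1) := by ring

lemma mul_four_pow_le_two_pow_mul_three_pow {d e : ℕ} (he : e ≤ d) :
    d * 4 ^ e ≤ 2 ^ d * 3 ^ e := by
  have hsplit : ∀ a : ℕ, a ^ e * a ^ (d - e) = a ^ d := fun a => by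
    rw [← pow_add, Nat.add_sub_cancel' he]
  refine Nat.le_of_mul_le_mul_right (c := 3 ^ (d - e)) ?_ (by positivity)
  calc d * 4 ^ e * 3 ^ (d - e) ≤ d * 4 ^ e * 4 ^ (d - e) := by gcongr; norm_num
    _ = d * 2 ^ d * 2 ^ d := by rw [mul_assoc, hsplit, show (4 : ℕ) = 2 * 2 by rfl, mul_pow]; ring
    _ ≤ 3 ^ d * 2 ^ d := by gcongr; exact mul_two_pow_le_three_pow d
    _ = 2 ^ d * 3 ^ e * 3 ^ (d - e) := by rw [mul_assoc, hsplit, mul_comm]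

/-- `M < d C(x,d) (4Δ)^e d! / ((2Δ)^d (3x)^e (d-e)!)`, cleared of denominators. -/
def WithinBudget (d Δ x e M : ℕ) : Prop :=
  (2 * Δ) ^ d * (3 * x) ^ e * (d - e)! * M < d * (4 * Δ) ^ e * d ! * x.choose d

namespace WithinBudget

variable {d Δ x e M : ℕ}

lemma zero_of_lt (h : (2 * Δ) ^ d * M < d * x.choose d) : WithinBudget d Δ x 0 M := by
  have := Nat.mul_lt_mul_of_pos_left h (Nat.factorial_pos d)
  simp only [WithinBudget, pow_zero, mul_one, Nat.sub_zero]
  linarith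

lemma mono {M' : ℕ} (hM : M' ≤ M) (h : WithinBudget d Δ x e M) : WithinBudget d Δ x e M' :=
  lt_of_le_of_lt (by gcongr) h

lemma succ {P : ℕ} (hΔ : 0 < Δ) (he : e < d) (hP : 3 * x * P ≤ 4 * Δ * (d - e) * M)
    (h : WithinBudget d Δ x e M) : WithinBudget d Δ x (e + 1) P := by
  have hfac : (d - e)! = (d - e) * (d - (e + 1))! := by
    rw [show d - e = d - (e + 1) + 1 by omega, Nat.factorial_succ]
  unfold WithinBudget at h ⊢
  calc (2 * Δ) ^ d * (3 * x) ^ (e + 1) * (d - (e + 1))! * P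
      = (2 * Δ) ^ d * (3 * x) ^ e * (d - (e + 1))! * (3 * x * P) := by ring
    _ ≤ (2 * Δ) ^ d * (3 * x) ^ e * (d - (e + 1))! * (4 * Δ * (d - e) * M) := by gcongr
    _ = 4 * Δ * ((2 * Δ) ^ d * (3 * x) ^ e * (d - e)! * M) := by rw [hfac]; ring
    _ < 4 * Δ * (d * (4 * Δ) ^ e * d ! * x.choose d) := by gcongr
    _ = d * (4 * Δ) ^ (e + 1) * d ! * x.choose d := by ring

lemma lt_choose (he : 0 < e) (hed : e ≤ d) (h : WithinBudget d Δ x e M) :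
    M < (x - e).choose (d - e) := by
  rcases Nat.eq_zero_or_pos Δ with rfl | hΔ
  · simp [WithinBudget, he.ne'] at h
  -- `C(x,d) C(d,e) = C(x,e) C(x-e,d-e)` and `e! C(x,e) ≤ x^e`
  have hbound : d * (4 * Δ) ^ e * d ! * x.choose d * d.choose e ≤
      (2 * Δ) ^ d * (3 * x) ^ e * (d - e)! * (x - e).choose (d - e) * d.choose e := by
    have hdesc : e ! * x.choose e ≤ x ^ e := by
      rw [← Nat.descFactorial_eq_factorial_mul_choose]; exact Nat.descFactorial_le_pow x e
    have hkey : d * (4 * Δ) ^ e * (e ! * x.choose e) ≤ (2 * Δ) ^ d * (3 * x) ^ e := calc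
      d * (4 * Δ) ^ e * (e ! * x.choose e) ≤ (d * 4 ^ e) * Δ ^ e * x ^ e := by
          rw [mul_pow, ← mul_assoc (d : ℕ)]; exact Nat.mul_le_mul_left _ hdesc
      _ ≤ (2 ^ d * 3 ^ e) * Δ ^ d * x ^ e := by
          have := Nat.pow_le_pow_right hΔ hed
          gcongr ?_ * ?_ * _
          exact mul_four_pow_le_two_pow_mul_three_pow hed
      _ = (2 * Δ) ^ d * (3 * x) ^ e := by ring
    calc d * (4 * Δ) ^ e * d ! * x.choose d * d.choose e
        = d * (4 * Δ) ^ e * (d.choose e * e ! * (d - e)!) * (x.choose d * d.choose e) := by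
          rw [Nat.choose_mul_factorial_mul_factorial hed]; ring
      _ = d * (4 * Δ) ^ e * (e ! * x.choose e) * (d - e)! * (x - e).choose (d - e) *
            d.choose e := by rw [Nat.choose_mul hed]; ring
      _ ≤ _ := by gcongr
  refine Nat.lt_of_mul_lt_mul_left (a := (2 * Δ) ^ d * (3 * x) ^ e * (d - e)!) ?_
  refine lt_of_lt_of_le h (Nat.le_of_mul_le_mul_right ?_ (Nat.choose_pos hed))
  simpa only [mul_assoc] using hbound

end WithinBudget

section FinsetCounting

variable {α : Type*} [DecidableEq α]

lemma card_powersetCard_filter_superset {T U : Finset α} (hTU : T ⊆ U) {d : ℕ} (hT : #T ≤ d) :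
    #((U.powersetCard d).filter (T ⊆ ·)) = (#U - #T).choose (d - #T) := by
  rw [← card_sdiff_of_subset hTU, ← card_powersetCard]
  refine card_nbij' (· \ T) (· ∪ T) ?_ ?_ ?_ ?_
  · intro B hB
    simp only [mem_coe, mem_filter, mem_powersetCard] at hB ⊢
    exact ⟨sdiff_subset_sdiff hB.1.1 le_rfl, by rw [card_sdiff_of_subset hB.2, hB.1.2]⟩
  · intro B hB
    simp only [mem_coe, mem_powersetCard, subset_sdiff] at hB
    simp only [mem_coe, mem_filter, mem_powersetCard]
    refine ⟨⟨union_subset hB.1.1 hTU, ?_⟩, subset_union_right⟩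
    rw [card_union_of_disjoint hB.1.2, hB.2]; omega
  · intro B hB
    exact sdiff_union_of_subset (mem_filter.1 hB).2
  · intro B hB
    simp only [mem_coe, mem_powersetCard, subset_sdiff] at hB
    exact union_sdiff_cancel_right hB.1.2

lemma exists_mem_powersetCard_superset_notMem {T U : Finset α} {𝓑 : Finset (Finset α)} {d : ℕ}
    (hTU : T ⊆ U) (hT : #T ≤ d) (h : #(𝓑.filter (T ⊆ ·)) < (#U - #T).choose (d - #T)) :
    ∃ B ∈ U.powersetCard d, T ⊆ B ∧ B ∉ 𝓑 := by
  rw [← card_powersetCard_filter_superset hTU hT] at h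
  obtain ⟨B, hB, hB𝓑⟩ := exists_mem_notMem_of_card_lt_card h
  rw [mem_filter] at hB
  exact ⟨B, hB.1, hB.2, fun h𝓑 => hB𝓑 (mem_filter.2 ⟨h𝓑, hB.2⟩)⟩

lemma sum_card_filter_insert_subset_le {𝓑 : Finset (Finset α)} {d : ℕ}
    (h𝓑 : ∀ B ∈ 𝓑, #B = d) {A T : Finset α} (hAT : Disjoint A T) :
    ∑ u ∈ A, #(𝓑.filter (insert u T ⊆ ·)) ≤ (d - #T) * #(𝓑.filter (T ⊆ ·)) := by
  have hcount := sum_card_bipartiteAbove_eq_sum_card_bipartiteBelow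
    (s := A) (t := 𝓑) (r := fun u B => insert u T ⊆ B)
  simp only [bipartiteAbove, bipartiteBelow] at hcount
  rw [hcount, ← sum_filter_of_ne (p := (T ⊆ ·)), mul_comm]
  · refine sum_le_card_nsmul _ _ _ fun B hB => ?_
    rw [mem_filter] at hB
    calc #(A.filter (insert · T ⊆ B)) ≤ #(B \ T) := card_le_card fun u hu => by
          rw [mem_filter] at hu
          exact mem_sdiff.2 ⟨insert_subset_iff.1 hu.2 |>.1, disjoint_left.1 hAT hu.1⟩
      _ = d - #T := by rw [card_sdiff_of_subset hB.2, h𝓑 B hB.1]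
  · intro B _ hne
    obtain ⟨u, hu⟩ := card_pos.1 (Nat.pos_of_ne_zero hne)
    exact (insert_subset_iff.1 (mem_filter.1 hu).2).2

lemma card_mul_le_of_forall_lt_of_sum_le {β : Type*} {D : Finset β} {P : β → ℕ} {a b K : ℕ}
    (hlt : ∀ u ∈ D, a * K < b * P u) (hsum : ∑ u ∈ D, P u ≤ K) : #D * a ≤ b := by
  rcases D.eq_empty_or_nonempty with rfl | hD
  · simp
  refine (Nat.lt_of_mul_lt_mul_right (a := K) ?_).le
  calc #D * a * K = ∑ _u ∈ D, a * K := by rw [sum_const, smul_eq_mul, mul_assoc]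
    _ < ∑ u ∈ D, b * P u := sum_lt_sum_of_nonempty hD hlt
    _ = b * ∑ u ∈ D, P u := by rw [mul_sum]
    _ ≤ b * K := by gcongr

lemma mul_card_biUnion_le {ι β : Type*} [DecidableEq β] {s : Finset ι} {D : ι → Finset β}
    {a b k : ℕ} (hs : #s ≤ a) (hD : ∀ i ∈ s, #(D i) * (k * a) ≤ b) : k * #(s.biUnion D) ≤ b := by
  rcases Nat.eq_zero_or_pos a with rfl | ha
  · simp [card_eq_zero.1 (Nat.le_zero.1 hs)]
  refine Nat.le_of_mul_le_mul_left ?_ ha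
  calc a * (k * #(s.biUnion D)) = #(s.biUnion D) * (k * a) := by ring
    _ ≤ ∑ i ∈ s, #(D i) * (k * a) := by rw [← sum_mul]; gcongr; exact card_biUnion_le
    _ ≤ ∑ _i ∈ s, b := sum_le_sum hD
    _ = #s * b := by rw [sum_const, smul_eq_mul]
    _ ≤ a * b := Nat.mul_le_mul_right _ hs

end FinsetCounting

section Embedding

open scoped Classical

namespace SimpleGraph

section Ordered

variable {N : ℕ} (H : SimpleGraph (Fin N))

noncomputable def neighborFinsetBelow (m : ℕ) (k : Fin N) : Finset (Fin N) :=
  univ.filter fun j => (j : ℕ) < m ∧ H.Adj j k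

/-- The natural order of `Fin N` is a `(d,Δ)`-degeneracy order: the sets
`N(v_k) ∩ {v_1,…,v_i}` of the definition are the `neighborFinsetBelow (i + 1) k`. -/
def OrderedDDeltaDegenerate (d Δ : ℕ) : Prop :=
  ∀ i : Fin N, #(H.neighborFinsetBelow i i) ≤ d ∧
    #((univ.filter fun k => i < k ∧ H.Adj i k).image (H.neighborFinsetBelow (↑i + 1))) ≤ Δ

variable {H}

@[simp]
lemma mem_neighborFinsetBelow {m : ℕ} {j k : Fin N} :
    j ∈ H.neighborFinsetBelow m k ↔ (j : ℕ) < m ∧ H.Adj j k := by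
  simp [neighborFinsetBelow]

lemma neighborFinsetBelow_succ_erase (i k : Fin N) :
    (H.neighborFinsetBelow (↑i + 1) k).erase i = H.neighborFinsetBelow i k := by
  ext j
  simp only [mem_erase, mem_neighborFinsetBelow, ne_eq, ← Fin.val_inj]
  constructor
  · rintro ⟨hne, hlt, hadj⟩
    exact ⟨by omega, hadj⟩
  · rintro ⟨hlt, hadj⟩
    exact ⟨by omega, by omega, hadj⟩

lemma neighborFinsetBelow_succ_of_not_adj {i k : Fin N} (h : ¬ H.Adj i k) :
    H.neighborFinsetBelow (↑i + 1) k = H.neighborFinsetBelow i k := by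
  rw [← neighborFinsetBelow_succ_erase, erase_eq_of_notMem]
  simpa using h

lemma card_neighborFinsetBelow_le {d Δ m : ℕ} (hH : H.OrderedDDeltaDegenerate d Δ) {k : Fin N}
    (hm : m ≤ k + 1) : #(H.neighborFinsetBelow m k) ≤ d := by
  refine le_trans (card_le_card fun j hj => ?_) (hH k).1
  rw [mem_neighborFinsetBelow] at hj ⊢
  have : j ≠ k := H.ne_of_adj hj.2
  exact ⟨by omega, hj.2⟩

lemma colorable_succ_of_card_neighborFinsetBelow_le {d : ℕ}
    (h : ∀ i : Fin N, #(H.neighborFinsetBelow i i) ≤ d) : H.Colorable (d + 1) := by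
  suffices ∀ m : ℕ, ∃ c : Fin N → Fin (d + 1),
      ∀ j k : Fin N, (k : ℕ) < m → j < k → H.Adj j k → c j ≠ c k by
    obtain ⟨c, hc⟩ := this N
    refine ⟨Coloring.mk c fun {a b} hab => ?_⟩
    rcases lt_or_gt_of_ne (H.ne_of_adj hab) with hlt | hlt
    · exact hc a b b.2 hlt hab
    · exact (hc b a a.2 hlt hab.symm).symm
  intro m
  induction m with
  | zero => exact ⟨0, fun j k hk => absurd hk (Nat.not_lt_zero _)⟩
  | succ m ih =>
    obtain ⟨c, hc⟩ := ih
    by_cases hm : m < N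
    swap
    · exact ⟨c, fun j k hk => hc j k (by omega)⟩
    set i : Fin N := ⟨m, hm⟩
    have hi : (i : ℕ) = m := rfl
    -- `i` has at most `d` earlier neighbours, so some colour is free for it
    obtain ⟨a, -, ha⟩ := exists_mem_notMem_of_card_lt_card
      (s := (H.neighborFinsetBelow i i).image c) (t := univ)
      (by simpa using card_image_le.trans_lt (Nat.lt_succ_of_le (h i)))
    refine ⟨Function.update c i a, fun j k hk hjk hadj => ?_⟩
    have hji : j ≠ i := fun hji => by
      have : (k : ℕ) ≤ m := by omega
      exact absurd hjk (by rw [hji, Fin.lt_def]; omega)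
    rcases Nat.lt_succ_iff_lt_or_eq.1 hk with hk | hk
    · rw [Function.update_of_ne hji, Function.update_of_ne (Fin.ne_of_val_ne (by omega))]
      exact hc j k hk hjk hadj
    · obtain rfl : k = i := Fin.ext hk
      rw [Function.update_of_ne hji, Function.update_self]
      exact fun hca => ha (mem_image.2 ⟨j, by simpa [i] using ⟨hjk, hadj⟩, hca⟩)

end Ordered

lemma exists_coloring_card_image_le {α : Type*} [Fintype α] {G : SimpleGraph α} {q d : ℕ}
    (hq : G.Colorable q) (hd : G.Colorable (d + 1)) :
    ∃ c : α → Fin q, (∀ a b, G.Adj a b → c a ≠ c b) ∧ #(univ.image c) ≤ d + 1 := by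
  rcases le_total q (d + 1) with hqd | hdq
  · obtain ⟨C⟩ := hq
    exact ⟨C, fun a b => C.valid, (card_le_univ _).trans (by simpa using hqd)⟩
  · obtain ⟨C⟩ := hd
    refine ⟨Fin.castLE hdq ∘ C, fun a b hab h => C.valid hab (Fin.castLE_injective hdq h), ?_⟩
    rw [← image_image]
    exact card_image_le.trans ((card_le_univ _).trans_eq (Fintype.card_fin _))

end SimpleGraph

lemma DDeltaDegenerate.exists_orderedDDeltaDegenerate_comap {W : Type*} [Fintype W]
    {H : SimpleGraph W} {d Δ : ℕ} (hH : DDeltaDegenerate H d Δ) :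
    ∃ f : Fin (Fintype.card W) ≃ W, (H.comap f).OrderedDDeltaDegenerate d Δ := by
  obtain ⟨f, hf⟩ := hH
  refine ⟨f, fun i => ⟨?_, ?_⟩⟩
  · refine le_of_eq_of_le ?_ (hf i).1
    rw [← Set.ncard_coe_finset]
    congr 1
    ext j
    simp
  · set classes := (univ.filter fun k => i < k ∧ (H.comap f).Adj i k).image
      ((H.comap f).neighborFinsetBelow (↑i + 1))
    set ψ : Finset (Fin (Fintype.card W)) → Set W := fun S => f '' ↑S
    have hinj : ψ.Injective := (Set.image_injective.2 f.injective).comp coe_injective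
    have hsub : ψ '' ↑classes ⊆ {S | ∃ j, i < j ∧
        H.Adj (f j) (f i) ∧ S = {v | H.Adj (f j) v ∧ f.symm v ≤ i}} := by
      rintro _ ⟨S, hS, rfl⟩
      rw [mem_coe, mem_image] at hS
      obtain ⟨k, hk, rfl⟩ := hS
      simp only [mem_filter, mem_univ, true_and, SimpleGraph.comap_adj] at hk
      refine ⟨k, hk.1, hk.2.symm, ?_⟩
      ext v
      simp only [ψ, Set.mem_image, mem_coe, SimpleGraph.mem_neighborFinsetBelow,
        SimpleGraph.comap_adj, Set.mem_ofPred_eq]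
      constructor
      · rintro ⟨j, ⟨hj, hadj⟩, rfl⟩
        exact ⟨hadj.symm, by rw [Equiv.symm_apply_apply, Fin.le_def]; omega⟩
      · rintro ⟨hadj, hv⟩
        exact ⟨f.symm v, ⟨Nat.lt_succ_of_le (Fin.le_def.1 hv), by simpa using hadj.symm⟩, by simp⟩
    calc #classes = (ψ '' ↑classes).ncard := by
          rw [Set.ncard_image_of_injective _ hinj, Set.ncard_coe_finset]
      _ ≤ _ := Set.ncard_le_ncard hsub (Set.toFinite _)
      _ ≤ Δ := (hf i).2

namespace DegenerateEmbedding

open SimpleGraph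

variable {V : Type*} [Fintype V] {N q : ℕ} (H : SimpleGraph (Fin N)) (G : SimpleGraph V)
  (Vs : Fin q → Finset V) (c : Fin N → Fin q) (d Δ x : ℕ)

noncomputable def commonNeighborsIn (A T : Finset V) : Finset V :=
  A.filter fun u => ∀ v ∈ T, G.Adj u v

noncomputable def badSets (γ : Fin q) : Finset (Finset V) :=
  ((univ.filter fun v => ∃ ℓ, ℓ ≠ γ ∧ v ∈ Vs ℓ).powersetCard d).filter
    fun B => #(commonNeighborsIn G (Vs γ) B) < x

noncomputable def laterColors (m : ℕ) (S : Finset (Fin N)) : Finset (Fin q) :=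
  (univ.filter fun k : Fin N => m ≤ k ∧ H.neighborFinsetBelow m k = S).image c

/-- Grouping the later vertices by their neighbourhood `S` among the first `m` vertices, rather
than treating them one at a time, is what keeps the number of constraints on each embedding step
down to `Δ`. -/
noncomputable def load (m : ℕ) (S : Finset (Fin N)) (T : Finset V) : ℕ :=
  ∑ γ ∈ laterColors H c m S, #((badSets G Vs d x γ).filter (T ⊆ ·))

structure IsGoodPartial (g : Fin N → V) (m : ℕ) : Prop where
  injOn : ∀ j k : Fin N, (j : ℕ) < m → (k : ℕ) < m → g j = g k → j = k
  map_adj : ∀ j k : Fin N, (j : ℕ) < m → (k : ℕ) < m → H.Adj j k → G.Adj (g j) (g k)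
  mem_part : ∀ j : Fin N, (j : ℕ) < m → g j ∈ Vs (c j)
  budget : ∀ k : Fin N, m ≤ k → (H.neighborFinsetBelow m k).Nonempty →
    WithinBudget d Δ x #(H.neighborFinsetBelow m k)
      (load H G Vs c d x m (H.neighborFinsetBelow m k) ((H.neighborFinsetBelow m k).image g))

def IsLightExtension (g : Fin N → V) (i : Fin N) (u : V) : Prop :=
  ∀ k, i < k → H.Adj i k →
    3 * x * load H G Vs c d x (↑i + 1) (H.neighborFinsetBelow (↑i + 1) k)
      (insert u ((H.neighborFinsetBelow i k).image g)) ≤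
    4 * Δ * (d - #(H.neighborFinsetBelow i k)) * load H G Vs c d x (↑i + 1)
      (H.neighborFinsetBelow (↑i + 1) k) ((H.neighborFinsetBelow i k).image g)

variable {H G Vs c d Δ x}

lemma commonNeighborsIn_anti {A T B : Finset V} (h : T ⊆ B) :
    commonNeighborsIn G A B ⊆ commonNeighborsIn G A T := fun u hu => by
  simp only [commonNeighborsIn, mem_filter] at hu ⊢
  exact ⟨hu.1, fun v hv => hu.2 v (h hv)⟩

lemma coe_badSets (γ : Fin q) : (badSets G Vs d x γ : Set (Finset V)) =
    {S | #S = d ∧ (∀ v ∈ S, ∃ ℓ, ℓ ≠ γ ∧ v ∈ Vs ℓ) ∧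
      {u | u ∈ Vs γ ∧ ∀ v ∈ S, G.Adj u v}.ncard < x} := by
  ext S
  have hcommon : {u | u ∈ Vs γ ∧ ∀ v ∈ S, G.Adj u v}.ncard = #(commonNeighborsIn G (Vs γ) S) := by
    rw [commonNeighborsIn, ← Set.ncard_coe_finset, coe_filter]
  simp only [badSets, coe_filter, mem_powersetCard, subset_iff, mem_filter, mem_univ, true_and,
    Set.mem_ofPred_eq, hcommon]
  tauto

lemma laterColors_succ_subset (i : Fin N) (S : Finset (Fin N)) :
    laterColors H c (↑i + 1) S ⊆ laterColors H c i (S.erase i) := by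
  intro γ hγ
  simp only [laterColors, mem_image, mem_filter, mem_univ, true_and] at hγ ⊢
  obtain ⟨k, ⟨hk, rfl⟩, rfl⟩ := hγ
  exact ⟨k, ⟨by omega, (neighborFinsetBelow_succ_erase i k).symm⟩, rfl⟩

lemma load_succ_le (i : Fin N) (S : Finset (Fin N)) (T : Finset V) :
    load H G Vs c d x (↑i + 1) S T ≤ load H G Vs c d x i (S.erase i) T :=
  sum_le_sum_of_subset (laterColors_succ_subset i S)

lemma card_laterColors_le (hc : ∀ a b, H.Adj a b → c a ≠ c b)
    (hcolors : #(univ.image c) ≤ d + 1) {m : ℕ} {i : Fin N} {S : Finset (Fin N)} (hi : i ∈ S) :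
    #(laterColors H c m S) ≤ d := by
  have hsub : laterColors H c m S ⊆ (univ.image c).erase (c i) := by
    intro γ hγ
    simp only [laterColors, mem_image, mem_filter, mem_univ, true_and] at hγ
    obtain ⟨k, ⟨-, rfl⟩, rfl⟩ := hγ
    exact mem_erase.2
      ⟨(hc i k (mem_neighborFinsetBelow.1 hi).2).symm, mem_image_of_mem c (mem_univ k)⟩
  have := card_le_card hsub
  rw [card_erase_of_mem (mem_image_of_mem c (mem_univ i))] at this
  omega

lemma pow_mul_load_empty_le (hbad : ∀ γ, (2 * Δ) ^ d * #(badSets G Vs d x γ) < x.choose d)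
    (m : ℕ) (S : Finset (Fin N)) :
    (2 * Δ) ^ d * load H G Vs c d x m S ∅ ≤ #(laterColors H c m S) * (x.choose d - 1) := by
  simp only [load, empty_subset, filter_true, mul_sum]
  refine sum_le_card_nsmul _ _ _ fun γ _ => ?_
  have := hbad γ
  omega

lemma sum_load_insert_le {m : ℕ} {S : Finset (Fin N)} {A T : Finset V} (hAT : Disjoint A T) :
    ∑ u ∈ A, load H G Vs c d x m S (insert u T) ≤ (d - #T) * load H G Vs c d x m S T := by
  simp only [load]
  rw [sum_comm, mul_sum]
  exact sum_le_sum fun γ _ => sum_card_filter_insert_subset_le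
    (fun B hB => (mem_powersetCard.1 (mem_filter.1 hB).1).2) hAT

lemma card_filter_load_insert_mul_le (m : ℕ) (S : Finset (Fin N)) (A T : Finset V) :
    #(A.filter fun u => u ∉ T ∧ 4 * Δ * (d - #T) * load H G Vs c d x m S T <
      3 * x * load H G Vs c d x m S (insert u T)) * (4 * Δ) ≤ 3 * x :=
  card_mul_le_of_forall_lt_of_sum_le (K := (d - #T) * load H G Vs c d x m S T)
    (fun u hu => by rw [← mul_assoc]; exact (mem_filter.1 hu).2.2)
    (sum_load_insert_le (disjoint_left.2 fun u hu => (mem_filter.1 hu).2.1))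

namespace IsGoodPartial

variable {g : Fin N → V} {i : Fin N}

lemma card_image {m : ℕ} (hg : IsGoodPartial H G Vs c d Δ x g m) {S : Finset (Fin N)}
    (hS : ∀ j ∈ S, (j : ℕ) < m) : #(S.image g) = #S :=
  card_image_of_injOn fun a ha b hb => hg.injOn a b (hS a ha) (hS b hb)

lemma le_card_commonNeighborsIn (hg : IsGoodPartial H G Vs c d Δ x g i)
    (hH : H.OrderedDDeltaDegenerate d Δ) (hc : ∀ a b, H.Adj a b → c a ≠ c b)
    (hsize : ∀ γ, x ≤ #(Vs γ)) :
    x ≤ #(commonNeighborsIn G (Vs (c i)) ((H.neighborFinsetBelow i i).image g)) := by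
  set S := H.neighborFinsetBelow i i with hSdef
  rcases S.eq_empty_or_nonempty with hS | ⟨j₀, hj₀⟩
  · simpa [hS, commonNeighborsIn] using hsize (c i)
  set U := univ.filter fun v => ∃ ℓ, ℓ ≠ c i ∧ v ∈ Vs ℓ
  have hTU : S.image g ⊆ U := by
    intro v hv
    obtain ⟨j, hj, rfl⟩ := mem_image.1 hv
    rw [hSdef, mem_neighborFinsetBelow] at hj
    simpa [U] using ⟨c j, hc j i hj.2, hg.mem_part j hj.1⟩
  have hUx : x ≤ #U := by
    rw [hSdef, mem_neighborFinsetBelow] at hj₀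
    exact (hsize (c j₀)).trans
      (card_le_card fun v hv => by simpa [U] using ⟨c j₀, hc _ _ hj₀.2, hv⟩)
  have hcard : #(S.image g) = #S := hg.card_image fun j hj => (mem_neighborFinsetBelow.1 hj).1
  have hSd : #S ≤ d := card_neighborFinsetBelow_le hH (by omega)
  have hload : #((badSets G Vs d x (c i)).filter (S.image g ⊆ ·)) ≤
      load H G Vs c d x i S (S.image g) :=
    single_le_sum (f := fun γ => #((badSets G Vs d x γ).filter (S.image g ⊆ ·)))
      (fun _ _ => Nat.zero_le _) (mem_image_of_mem c (by simp [S]))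
  have hlt := (hg.budget i le_rfl ⟨j₀, hj₀⟩).lt_choose (card_pos.2 ⟨j₀, hj₀⟩) hSd
  obtain ⟨B, hBU, hTB, hB⟩ := exists_mem_powersetCard_superset_notMem hTU (hcard ▸ hSd) <| by
    rw [hcard]
    exact hload.trans_lt (hlt.trans_le (Nat.choose_le_choose _ (by omega)))
  have hBx : x ≤ #(commonNeighborsIn G (Vs (c i)) B) := by
    by_contra h
    exact hB (mem_filter.2 ⟨hBU, by omega⟩)
  exact hBx.trans (card_le_card (commonNeighborsIn_anti hTB))

lemma withinBudget_succ (hg : IsGoodPartial H G Vs c d Δ x g i)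
    (hH : H.OrderedDDeltaDegenerate d Δ) (hc : ∀ a b, H.Adj a b → c a ≠ c b)
    (hcolors : #(univ.image c) ≤ d + 1)
    (hbad : ∀ γ, (2 * Δ) ^ d * #(badSets G Vs d x γ) < x.choose d)
    {k : Fin N} (hik : i < k) (hadj : H.Adj i k) :
    WithinBudget d Δ x #(H.neighborFinsetBelow i k) (load H G Vs c d x (↑i + 1)
      (H.neighborFinsetBelow (↑i + 1) k) ((H.neighborFinsetBelow i k).image g)) := by
  have hi : i ∈ H.neighborFinsetBelow (↑i + 1) k := by simp [hadj]
  rcases (H.neighborFinsetBelow i k).eq_empty_or_nonempty with hS | hS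
  · have hd : 0 < d := (card_pos.2 ⟨i, hi⟩).trans_le (card_neighborFinsetBelow_le hH (by omega))
    have hC : 0 < x.choose d := (Nat.zero_le _).trans_lt (hbad (c i))
    rw [hS, card_empty, image_empty]
    refine WithinBudget.zero_of_lt ((pow_mul_load_empty_le hbad _ _).trans_lt ?_)
    calc #(laterColors H c (↑i + 1) (H.neighborFinsetBelow (↑i + 1) k)) * (x.choose d - 1)
        ≤ d * (x.choose d - 1) := Nat.mul_le_mul_right _ (card_laterColors_le hc hcolors hi)
      _ < d * x.choose d := Nat.mul_lt_mul_of_pos_left (by omega) hd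
  · refine (hg.budget k hik.le hS).mono ((load_succ_le i _ _).trans_eq ?_)
    rw [neighborFinsetBelow_succ_erase]

lemma exists_extension (hg : IsGoodPartial H G Vs c d Δ x g i)
    (hH : H.OrderedDDeltaDegenerate d Δ) (hc : ∀ a b, H.Adj a b → c a ≠ c b)
    (hsize : ∀ γ, x ≤ #(Vs γ)) (hx : 4 * N ≤ x) :
    ∃ u ∈ commonNeighborsIn G (Vs (c i)) ((H.neighborFinsetBelow i i).image g),
      (∀ j : Fin N, (j : ℕ) < i → g j ≠ u) ∧ IsLightExtension H G Vs c d Δ x g i u := by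
  set cand := commonNeighborsIn G (Vs (c i)) ((H.neighborFinsetBelow i i).image g)
  set T : Finset (Fin N) → Finset V := fun S => (S.erase i).image g
  set dangerous : Finset (Fin N) → Finset V := fun S => cand.filter fun u => u ∉ T S ∧
    4 * Δ * (d - #(T S)) * load H G Vs c d x (↑i + 1) S (T S) <
      3 * x * load H G Vs c d x (↑i + 1) S (insert u (T S))
  set classes := (univ.filter fun k => i < k ∧ H.Adj i k).image (H.neighborFinsetBelow (↑i + 1))
  set used := (Iio i).image g
  have hdangerous : 4 * #(classes.biUnion dangerous) ≤ 3 * x :=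
    mul_card_biUnion_le (hH i).2 fun S _ => card_filter_load_insert_mul_le _ _ _ _
  obtain ⟨u, hu, hfree⟩ := exists_mem_notMem_of_card_lt_card (s := used ∪ classes.biUnion dangerous)
    (t := cand) <| by
      have := card_union_le used (classes.biUnion dangerous)
      have : #used ≤ i := card_image_le.trans (Fin.card_Iio i).le
      have : x ≤ #cand := hg.le_card_commonNeighborsIn hH hc hsize
      omega
  simp only [mem_union, not_or, mem_biUnion, not_exists, not_and] at hfree
  have hfresh : ∀ j : Fin N, (j : ℕ) < i → g j ≠ u := fun j hj hju =>
    hfree.1 (mem_image.2 ⟨j, mem_Iio.2 hj, hju⟩)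
  refine ⟨u, hu, hfresh, fun k hik hadj => ?_⟩
  have hT : T (H.neighborFinsetBelow (↑i + 1) k) = (H.neighborFinsetBelow i k).image g := by
    simp only [T, neighborFinsetBelow_succ_erase]
  have hnot := hfree.2 _ (mem_image.2 ⟨k, by simp [hik, hadj], rfl⟩)
  simp only [dangerous, mem_filter, hT, not_and, not_lt] at hnot
  rw [← hg.card_image fun j hj => (mem_neighborFinsetBelow.1 hj).1]
  refine hnot hu fun hmem => ?_
  obtain ⟨j, hj, hju⟩ := mem_image.1 hmem
  exact hfresh j (mem_neighborFinsetBelow.1 hj).1 hju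

lemma withinBudget_update (hg : IsGoodPartial H G Vs c d Δ x g i)
    (hH : H.OrderedDDeltaDegenerate d Δ) (hc : ∀ a b, H.Adj a b → c a ≠ c b)
    (hcolors : #(univ.image c) ≤ d + 1)
    (hbad : ∀ γ, (2 * Δ) ^ d * #(badSets G Vs d x γ) < x.choose d) {u : V}
    (hlight : IsLightExtension H G Vs c d Δ x g i u)
    {k : Fin N} (hk : ↑i + 1 ≤ (k : ℕ)) (hne : (H.neighborFinsetBelow (↑i + 1) k).Nonempty) :
    WithinBudget d Δ x #(H.neighborFinsetBelow (↑i + 1) k)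
      (load H G Vs c d x (↑i + 1) (H.neighborFinsetBelow (↑i + 1) k)
        ((H.neighborFinsetBelow (↑i + 1) k).image (Function.update g i u))) := by
  have hold : ∀ j ∈ H.neighborFinsetBelow i k, Function.update g i u j = g j := fun j hj =>
    Function.update_of_ne (Fin.ne_of_val_ne (mem_neighborFinsetBelow.1 hj).1.ne) _ _
  by_cases hadj : H.Adj i k
  · have hik : i < k := Fin.lt_def.2 (by omega)
    have hi : i ∈ H.neighborFinsetBelow (↑i + 1) k := by simp [hadj]
    have hsplit : H.neighborFinsetBelow (↑i + 1) k = insert i (H.neighborFinsetBelow i k) := by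
      rw [← neighborFinsetBelow_succ_erase, insert_erase hi]
    have hcard : #(H.neighborFinsetBelow (↑i + 1) k) = #(H.neighborFinsetBelow i k) + 1 := by
      rw [hsplit, card_insert_of_notMem (by simp)]
    have hΔ : 0 < Δ := (card_pos.2 ⟨_, mem_image.2 ⟨k, by simp [hik, hadj], rfl⟩⟩).trans_le (hH i).2
    have hd : #(H.neighborFinsetBelow i k) < d := by
      have := card_neighborFinsetBelow_le hH (m := ↑i + 1) (by omega : ↑i + 1 ≤ (k : ℕ) + 1)
      omega
    have himage : (H.neighborFinsetBelow (↑i + 1) k).image (Function.update g i u) =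
        insert u ((H.neighborFinsetBelow i k).image g) := by
      rw [hsplit, image_insert, Function.update_self, image_congr hold]
    rw [hcard, himage]
    exact (hg.withinBudget_succ hH hc hcolors hbad hik hadj).succ hΔ hd (hlight k hik hadj)
  · rw [neighborFinsetBelow_succ_of_not_adj hadj] at hne ⊢
    rw [image_congr hold]
    refine (hg.budget k (by omega) hne).mono ((load_succ_le i _ _).trans_eq ?_)
    rw [erase_eq_of_notMem (by simp)]

lemma update (hg : IsGoodPartial H G Vs c d Δ x g i)
    (hH : H.OrderedDDeltaDegenerate d Δ) (hc : ∀ a b, H.Adj a b → c a ≠ c b)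
    (hcolors : #(univ.image c) ≤ d + 1)
    (hbad : ∀ γ, (2 * Δ) ^ d * #(badSets G Vs d x γ) < x.choose d) {u : V}
    (hu : u ∈ commonNeighborsIn G (Vs (c i)) ((H.neighborFinsetBelow i i).image g))
    (hfresh : ∀ j : Fin N, (j : ℕ) < i → g j ≠ u)
    (hlight : IsLightExtension H G Vs c d Δ x g i u) :
    IsGoodPartial H G Vs c d Δ x (Function.update g i u) (↑i + 1) := by
  have hcases : ∀ j : Fin N, (j : ℕ) < ↑i + 1 → (j : ℕ) < i ∨ j = i := fun j hj =>
    (Nat.lt_succ_iff_lt_or_eq.1 hj).imp_right Fin.ext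
  have hold : ∀ j : Fin N, (j : ℕ) < i → Function.update g i u j = g j := fun j hj =>
    Function.update_of_ne (Fin.ne_of_val_ne hj.ne) _ _
  have hnew : Function.update g i u i = u := Function.update_self ..
  obtain ⟨hu, hadj_u⟩ := mem_filter.1 hu
  refine ⟨fun j k hj hk hjk => ?_, fun j k hj hk hjk => ?_, fun j hj => ?_,
    fun k hk hne => hg.withinBudget_update hH hc hcolors hbad hlight hk hne⟩
  · rcases hcases j hj with hj | rfl <;> rcases hcases k hk with hk | rfl
    · rw [hold j hj, hold k hk] at hjk
      exact hg.injOn j k hj hk hjk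
    · rw [hold j hj, hnew] at hjk
      exact absurd hjk (hfresh j hj)
    · rw [hnew, hold k hk] at hjk
      exact absurd hjk.symm (hfresh k hk)
    · rfl
  · rcases hcases j hj with hj | rfl <;> rcases hcases k hk with hk | rfl
    · rw [hold j hj, hold k hk]
      exact hg.map_adj j k hj hk hjk
    · rw [hold j hj, hnew]
      exact (hadj_u _ (mem_image_of_mem g (by simp [hj, hjk]))).symm
    · rw [hnew, hold k hk]
      exact hadj_u _ (mem_image_of_mem g (by simp [hk, hjk.symm]))
    · exact (H.irrefl hjk).elim
  · rcases hcases j hj with hj | rfl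
    · rw [hold j hj]
      exact hg.mem_part j hj
    · rwa [hnew]

end IsGoodPartial

theorem exists_embedding_of_orderedDDeltaDegenerate (hH : H.OrderedDDeltaDegenerate d Δ)
    (hcol : H.Colorable q) (hx : 4 * N ≤ x) (hsize : ∀ γ, x ≤ #(Vs γ))
    (hbad : ∀ γ, (2 * Δ) ^ d * #(badSets G Vs d x γ) < x.choose d) :
    ∃ g : Fin N ↪ V, ∀ a b, H.Adj a b → G.Adj (g a) (g b) := by
  obtain ⟨c, hc, hcolors⟩ := exists_coloring_card_image_le hcol
    (colorable_succ_of_card_neighborFinsetBelow_le fun i => (hH i).1)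
  have hstart : ∃ g, IsGoodPartial H G Vs c d Δ x g 0 := by
    obtain ⟨g⟩ : Nonempty (Fin N → V) := by
      rcases N with _ | N
      · exact ⟨finZeroElim⟩
      · obtain ⟨v, -⟩ := card_pos.1 (by have := hsize (c 0); omega : 0 < #(Vs (c 0)))
        exact ⟨fun _ => v⟩
    exact ⟨g, ⟨by simp, by simp, by simp, fun k _ hk => by simp [neighborFinsetBelow] at hk⟩⟩
  have hgood : ∀ m ≤ N, ∃ g, IsGoodPartial H G Vs c d Δ x g m := by
    intro m hm
    induction m with
    | zero => exact hstart
    | succ m ih =>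
      obtain ⟨g, hg⟩ := ih (by omega)
      obtain ⟨u, hu, hfresh, hlight⟩ := hg.exists_extension (i := ⟨m, hm⟩) hH hc hsize hx
      exact ⟨_, hg.update hH hc hcolors hbad hu hfresh hlight⟩
  obtain ⟨g, hg⟩ := hgood N le_rfl
  exact ⟨⟨g, fun a b h => hg.injOn a b a.2 b.2 h⟩, fun a b h => hg.map_adj a b a.2 b.2 h⟩

end DegenerateEmbedding

end Embedding

/-- Embedding lemma: let `H` be a `(d,Δ)`-degenerate graph with `n` vertices and chromatic number
at most `q`, and let `G` be a graph with vertex subsets `V_1,…,V_q` such that for each `i`,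
`|V_i| ≥ x ≥ 4n` and the number of `d`-element subsets `S ⊆ ⋃_{ℓ ≠ i} V_ℓ` with fewer than `x`
common neighbors in `V_i` is less than `(2Δ)^{-d} C(x,d)`. Then `G` contains a copy of `H`. -/
theorem stmt_10 {W V : Type*} [Fintype W] [Fintype V]
    (H : SimpleGraph W) (G : SimpleGraph V) (d Δ q n x : ℕ)
    (hn : Fintype.card W = n) (hH : DDeltaDegenerate H d Δ)
    (hchr : H.chromaticNumber ≤ (q : ℕ∞))
    (Vs : Fin q → Finset V) (hx : 4 * n ≤ x) (hsize : ∀ i, x ≤ (Vs i).card)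
    (hbad : ∀ i, (2 * Δ) ^ d *
        {S : Finset V | S.card = d ∧ (∀ v ∈ S, ∃ j, j ≠ i ∧ v ∈ Vs j) ∧
          {u : V | u ∈ Vs i ∧ ∀ v ∈ S, G.Adj u v}.ncard < x}.ncard
      < x.choose d) :
    ∃ f : W ↪ V, ∀ a b : W, H.Adj a b → G.Adj (f a) (f b) := by
  obtain ⟨f, hf⟩ := hH.exists_orderedDDeltaDegenerate_comap
  have hcol : (H.comap f).Colorable q :=
    (SimpleGraph.chromaticNumber_le_iff_colorable.1 hchr).of_hom (SimpleGraph.Hom.comap f H)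
  obtain ⟨g, hg⟩ := DegenerateEmbedding.exists_embedding_of_orderedDDeltaDegenerate hf hcol
    (hn ▸ hx) hsize fun γ => by
      simpa only [← DegenerateEmbedding.coe_badSets, Set.ncard_coe_finset] using hbad γ
  exact ⟨f.symm.toEmbedding.trans g, fun a b hab => hg _ _ (by simpa using hab)⟩
end

section
/- If a graph G is (α, ρ, ε/4, 2)-sparse, then for every positive integer h, G is ((2/ρ)^{h-1} α, 2^{1-h} ρ^h, ε, 2^h)-sparse. -/
/-!
Induction on `h`. Sparsity with two parts splits `U` into disjoint `W₁`, `W₂` of size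
`w = ⌈ρ|U|⌉` with `e(W₁, W₂) ≤ (ε/4) w²`; each of them is split recursively into `2^(h-1)` parts
of size `s`. Edges inside `W₁` and inside `W₂` are handled by the induction hypothesis. For the
edges between the two halves the recursion is strengthened: the parts chosen inside a set `U`
must together carry at most twice their share `|W|/|U|` of the edges from `U` to a prescribed
set `Y`. Taking `Y = W₂` for the parts `A` in `W₁` and then `Y = ⋃ A` for the parts `B` in `W₂`
gives `e(⋃ A, ⋃ B) ≤ (2^h s / w)² e(W₁, W₂) ≤ ε (2^(h-1) s)²`. The strengthening is obtained by
working inside the vertices of `U` with at most twice the average number of edges to `Y`, which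
by Markov's inequality form at least half of `U`; this halving at every level is where the
powers of `2` in the parameters come from.
-/

/-- The number of (ordered) adjacent pairs with first coordinate in `A` and second in `B`;
for disjoint `A`, `B` this is the number of edges between `A` and `B`. -/
noncomputable def eBetween {V : Type*} (G : SimpleGraph V) (A B : Finset V) : ℕ :=
  {p : V × V | p.1 ∈ A ∧ p.2 ∈ B ∧ G.Adj p.1 p.2}.ncard

/-- `G` is `(α,ρ,ε,t)`-sparse if for every vertex subset `U` with `|U| ≥ α|V|` there are
pairwise disjoint subsets `W_1,…,W_t ⊆ U` with `|W_i| = ⌈ρ|U|⌉` and density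
`d_G(W_1,…,W_t) = (∑_{i<j} e(W_i,W_j)) / (∑_{i<j} |W_i||W_j|)` at most `ε`. -/
def Sparse {V : Type*} [Fintype V] (G : SimpleGraph V) (α ρ ε : ℝ) (t : ℕ) : Prop :=
  ∀ U : Finset V, α * (Fintype.card V : ℝ) ≤ (U.card : ℝ) →
    ∃ Ws : Fin t → Finset V, (∀ i, Ws i ⊆ U) ∧ Pairwise (Function.onFun Disjoint Ws) ∧
      (∀ i, (Ws i).card = ⌈ρ * (U.card : ℝ)⌉₊) ∧
      (∑ i : Fin t, ∑ j : Fin t, if i < j then (eBetween G (Ws i) (Ws j) : ℝ) else 0) ≤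
        ε * ∑ i : Fin t, ∑ j : Fin t,
          if i < j then ((Ws i).card : ℝ) * ((Ws j).card : ℝ) else 0

open Finset

theorem sum_sum_ite_lt_eq_half {ι : Type*} [Fintype ι] [LinearOrder ι] [DecidableEq ι]
    (F : ι → ι → ℝ) (hF : ∀ i j, F i j = F j i) :
    ∑ i, ∑ j, (if i < j then F i j else 0) = (∑ i, ∑ j, if i = j then 0 else F i j) / 2 := by
  have hsplit : ∀ i j, (if i = j then 0 else F i j) =
      (if i < j then F i j else 0) + (if j < i then F j i else 0) := by
    intro i j
    rcases lt_trichotomy i j with h | rfl | h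
    · simp [h, h.ne, h.not_gt]
    · simp
    · simp [h, h.ne', h.not_gt, hF i j]
  simp only [hsplit, sum_add_distrib]
  rw [sum_comm (f := fun i j => if j < i then F j i else 0)]
  ring

theorem sum_sum_ite_eq_zero_const (ι : Type*) [Fintype ι] [DecidableEq ι] (c : ℝ) :
    ∑ i : ι, ∑ j : ι, (if i = j then 0 else c) = Fintype.card ι * (Fintype.card ι - 1) * c := by
  have hrow : ∀ i j : ι, (if i = j then 0 else c) = c - if i = j then c else 0 := by
    intro i j
    split_ifs <;> ring
  simp only [hrow, sum_sub_distrib, sum_ite_eq, mem_univ, if_true, sum_const, card_univ,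
    nsmul_eq_mul]
  ring

theorem le_mul_sq_of_mul_le_mul_of_mul_le_mul {w c x y z δ : ℝ} (hw : 0 < w) (hc : 0 ≤ c)
    (hxy : w * x ≤ c * y) (hyz : w * y ≤ c * z) (hz : z ≤ δ * (w * w)) : x ≤ δ * c ^ 2 := by
  have : w ^ 2 * x ≤ w ^ 2 * (δ * c ^ 2) :=
    calc w ^ 2 * x = w * (w * x) := by ring
      _ ≤ w * (c * y) := by gcongr
      _ = c * (w * y) := by ring
      _ ≤ c * (c * z) := by gcongr
      _ ≤ c * (c * (δ * (w * w))) := by gcongr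
      _ = w ^ 2 * (δ * c ^ 2) := by ring
  exact le_of_mul_le_mul_left this (by positivity)

section

variable {V : Type*} (G : SimpleGraph V)

theorem eBetween_eq_card_interedges [DecidableRel G.Adj] (A B : Finset V) :
    eBetween G A B = #(G.interedges A B) := by
  rw [eBetween, ← Set.ncard_coe_finset]
  congr 1
  ext p
  simp [SimpleGraph.mem_interedges_iff]

theorem eBetween_comm (A B : Finset V) : eBetween G A B = eBetween G B A := by
  classical
  have := G.symm
  simp only [eBetween_eq_card_interedges]
  exact Rel.card_interedges_comm A B

theorem eBetween_mono {A₁ A₂ B₁ B₂ : Finset V} (hA : A₁ ⊆ A₂) (hB : B₁ ⊆ B₂) :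
    eBetween G A₁ B₁ ≤ eBetween G A₂ B₂ := by
  classical
  simp only [eBetween_eq_card_interedges]
  exact card_le_card (G.interedges_mono hA hB)

@[simp]
theorem eBetween_empty_left (B : Finset V) : eBetween G ∅ B = 0 := by
  classical
  simp [eBetween_eq_card_interedges]

theorem eBetween_biUnion_left [DecidableEq V] {ι : Type*} (s : Finset ι) {f : ι → Finset V}
    (hf : (s : Set ι).PairwiseDisjoint f) (B : Finset V) :
    eBetween G (s.biUnion f) B = ∑ i ∈ s, eBetween G (f i) B := by
  classical
  simp only [eBetween_eq_card_interedges, G.interedges_biUnion_left]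
  exact card_biUnion fun i hi j hj hij => G.interedges_disjoint_left (hf hi hj hij) B

theorem eBetween_eq_sum_singleton [DecidableEq V] (A B : Finset V) :
    eBetween G A B = ∑ v ∈ A, eBetween G {v} B := by
  conv_lhs => rw [← A.biUnion_singleton_eq_self]
  exact eBetween_biUnion_left G A (fun _ _ _ _ hij => disjoint_singleton.2 hij) B

theorem eBetween_biUnion_biUnion [DecidableEq V] {ι κ : Type*} [Fintype ι] [Fintype κ]
    {A : ι → Finset V} {B : κ → Finset V} (hA : Pairwise (Function.onFun Disjoint A))
    (hB : Pairwise (Function.onFun Disjoint B)) :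
    eBetween G (univ.biUnion A) (univ.biUnion B) = ∑ i, ∑ j, eBetween G (A i) (B j) := by
  rw [eBetween_biUnion_left G univ fun i _ j _ hij => hA hij]
  refine sum_congr rfl fun i _ => ?_
  rw [eBetween_comm, eBetween_biUnion_left G univ fun i _ j _ hij => hB hij]
  exact sum_congr rfl fun j _ => eBetween_comm G _ _

noncomputable def lowDegreeSet (U Y : Finset V) : Finset V :=
  {v ∈ U | #U * eBetween G {v} Y ≤ 2 * eBetween G U Y}

theorem card_le_two_mul_card_lowDegreeSet (U Y : Finset V) :
    #U ≤ 2 * #(lowDegreeSet G U Y) := by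
  classical
  set L := lowDegreeSet G U Y
  have hLU : L ⊆ U := filter_subset _ _
  suffices 2 * #(U \ L) ≤ #U by
    rw [card_sdiff_of_subset hLU] at this
    have := card_le_card hLU
    omega
  rcases (U \ L).eq_empty_or_nonempty with hH | hH
  · simp [hH]
  have hhigh : ∀ v ∈ U \ L, 2 * eBetween G U Y < #U * eBetween G {v} Y := by
    intro v hv
    rw [mem_sdiff] at hv
    simpa [L, lowDegreeSet, hv.1] using hv.2
  refine (Nat.lt_of_mul_lt_mul_right (a := eBetween G U Y) ?_).le
  calc 2 * #(U \ L) * eBetween G U Y = ∑ _v ∈ U \ L, 2 * eBetween G U Y := by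
        rw [sum_const, smul_eq_mul]; ring
    _ < ∑ v ∈ U \ L, #U * eBetween G {v} Y := sum_lt_sum_of_nonempty hH hhigh
    _ = #U * ∑ v ∈ U \ L, eBetween G {v} Y := (mul_sum ..).symm
    _ ≤ #U * eBetween G U Y := by
        rw [eBetween_eq_sum_singleton G U]
        gcongr
        exact sdiff_subset

theorem card_mul_eBetween_le_of_subset_lowDegreeSet {U Y W : Finset V}
    (hW : W ⊆ lowDegreeSet G U Y) : #U * eBetween G W Y ≤ 2 * #W * eBetween G U Y := by
  classical
  rw [eBetween_eq_sum_singleton G W, mul_sum]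
  calc ∑ v ∈ W, #U * eBetween G {v} Y ≤ ∑ _v ∈ W, 2 * eBetween G U Y :=
        sum_le_sum fun v hv => (mem_filter.1 (hW hv)).2
    _ = 2 * #W * eBetween G U Y := by rw [sum_const, smul_eq_mul]; ring

theorem exists_subset_card_eq_mul_eBetween_le {U : Finset V} (Y : Finset V) {s : ℕ}
    (hs : s ≤ #U) : ∃ W ⊆ U, #W = s ∧ #U * eBetween G W Y ≤ 2 * s * eBetween G U Y := by
  by_cases hL : s ≤ #(lowDegreeSet G U Y)
  · obtain ⟨W, hWL, rfl⟩ := exists_subset_card_eq hL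
    exact ⟨W, hWL.trans (filter_subset _ _), rfl,
      card_mul_eBetween_le_of_subset_lowDegreeSet G hWL⟩
  · obtain ⟨W, hWU, rfl⟩ := exists_subset_card_eq hs
    have := card_le_two_mul_card_lowDegreeSet G U Y
    exact ⟨W, hWU, rfl, Nat.mul_le_mul (by omega) (eBetween_mono G hWU subset_rfl)⟩

end

section

variable {V : Type*} (G : SimpleGraph V) {ι κ : Type*} [Fintype ι] [Fintype κ]
  [DecidableEq ι] [DecidableEq κ]

noncomputable def crossEdges (Ws : ι → Finset V) : ℕ :=
  ∑ i, ∑ j, if i = j then 0 else eBetween G (Ws i) (Ws j)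

structure IsSparseFamily (ε : ℝ) (U : Finset V) (s : ℕ) (Ws : ι → Finset V) : Prop where
  subset : ∀ i, Ws i ⊆ U
  pairwise_disjoint : Pairwise (Function.onFun Disjoint Ws)
  card_eq : ∀ i, #(Ws i) = s
  crossEdges_le : (crossEdges G Ws : ℝ) ≤ ε * (Fintype.card ι * (Fintype.card ι - 1)) * s ^ 2

theorem crossEdges_comp_equiv (Ws : ι → Finset V) (e : κ ≃ ι) :
    crossEdges G (Ws ∘ e) = crossEdges G Ws :=
  Fintype.sum_equiv e _ _ fun i => Fintype.sum_equiv e _ _ fun j => by simp [e.injective.eq_iff]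

theorem isSparseFamily_empty (ε : ℝ) (U : Finset V) :
    IsSparseFamily G ε U 0 fun _ : ι => (∅ : Finset V) where
  subset _ := empty_subset U
  pairwise_disjoint _ _ _ := disjoint_empty_left _
  card_eq _ := card_empty
  crossEdges_le := by simp [crossEdges]

theorem isSparseFamily_unique [Unique ι] (ε : ℝ) {U W : Finset V} (hW : W ⊆ U) :
    IsSparseFamily G ε U #W fun _ : ι => W where
  subset _ := hW
  pairwise_disjoint i j hij := (hij (Subsingleton.elim i j)).elim
  card_eq _ := rfl
  crossEdges_le := by simp [crossEdges, Subsingleton.elim _ default]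

namespace IsSparseFamily

variable {G} {ε : ℝ} {U : Finset V} {s : ℕ}

theorem mono {Ws : ι → Finset V} (h : IsSparseFamily G ε U s Ws) {U' : Finset V}
    (hU : U ⊆ U') :
    IsSparseFamily G ε U' s Ws :=
  { h with subset := fun i => (h.subset i).trans hU }

theorem comp_equiv {Ws : ι → Finset V} (h : IsSparseFamily G ε U s Ws) (e : κ ≃ ι) :
    IsSparseFamily G ε U s (Ws ∘ e) where
  subset i := h.subset (e i)
  pairwise_disjoint := h.pairwise_disjoint.comp_of_injective e.injective
  card_eq i := h.card_eq (e i)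
  crossEdges_le := by rw [crossEdges_comp_equiv, Fintype.card_congr e]; exact h.crossEdges_le

theorem card_biUnion [DecidableEq V] {Ws : ι → Finset V} (h : IsSparseFamily G ε U s Ws) :
    #(univ.biUnion Ws) = Fintype.card ι * s := by
  rw [Finset.card_biUnion fun i _ j _ hij => h.pairwise_disjoint hij]
  simp [h.card_eq]

theorem sumElim [DecidableEq V] {U₁ U₂ : Finset V} {A B : ι → Finset V}
    (hA : IsSparseFamily G ε U₁ s A) (hB : IsSparseFamily G ε U₂ s B) (hU : Disjoint U₁ U₂)
    (hAB : (eBetween G (univ.biUnion A) (univ.biUnion B) : ℝ) ≤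
      ε * Fintype.card ι ^ 2 * s ^ 2) :
    IsSparseFamily G ε (U₁ ∪ U₂) s (Sum.elim A B) where
  subset := by
    rintro (i | i)
    exacts [(hA.subset i).trans subset_union_left, (hB.subset i).trans subset_union_right]
  pairwise_disjoint := by
    rintro (i | i) (j | j) hij
    · exact hA.pairwise_disjoint fun h => hij (congrArg _ h)
    · exact hU.mono (hA.subset i) (hB.subset j)
    · exact hU.symm.mono (hB.subset i) (hA.subset j)
    · exact hB.pairwise_disjoint fun h => hij (congrArg _ h)
  card_eq := by
    rintro (i | i)
    exacts [hA.card_eq i, hB.card_eq i]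
  crossEdges_le := by
    have hsplit : crossEdges G (Sum.elim A B) = crossEdges G A + crossEdges G B +
        2 * eBetween G (univ.biUnion A) (univ.biUnion B) := by
      rw [eBetween_biUnion_biUnion G hA.pairwise_disjoint hB.pairwise_disjoint]
      simp only [crossEdges, Fintype.sum_sum_type, Sum.elim_inl, Sum.elim_inr, Sum.inl.injEq,
        Sum.inr.injEq, reduceCtorEq, if_false, sum_add_distrib]
      have hBA : ∑ i, ∑ j, eBetween G (B i) (A j) = ∑ i, ∑ j, eBetween G (A i) (B j) := by
        rw [sum_comm]
        exact sum_congr rfl fun _ _ => sum_congr rfl fun _ _ => eBetween_comm G _ _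
      rw [hBA]
      ring
    have hA' := hA.crossEdges_le
    have hB' := hB.crossEdges_le
    rw [hsplit, Fintype.card_sum]
    push_cast
    linarith

end IsSparseFamily

end

section

variable {V : Type*} {G : SimpleGraph V}

theorem IsSparseFamily.sum_eBetween_le {ε : ℝ} {U : Finset V} {s t : ℕ}
    {Ws : Fin t → Finset V} (h : IsSparseFamily G ε U s Ws) :
    (∑ i, ∑ j, if i < j then (eBetween G (Ws i) (Ws j) : ℝ) else 0) ≤
      ε * ∑ i, ∑ j, if i < j then (#(Ws i) : ℝ) * #(Ws j) else 0 := by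
  rw [sum_sum_ite_lt_eq_half _ fun i j => by rw [eBetween_comm],
    sum_sum_ite_lt_eq_half _ fun i j => mul_comm _ _]
  simp only [h.card_eq, sum_sum_ite_eq_zero_const, Fintype.card_fin]
  have := h.crossEdges_le
  simp only [crossEdges, Nat.cast_sum, Nat.cast_ite, Nat.cast_zero, Fintype.card_fin] at this
  linarith

variable [Fintype V]

theorem sparse_of_forall_exists_isSparseFamily {α ρ ε : ℝ} {t : ℕ}
    (h : ∀ U : Finset V, α * Fintype.card V ≤ #U →
      ∃ Ws : Fin t → Finset V, IsSparseFamily G ε U ⌈ρ * #U⌉₊ Ws) :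
    Sparse G α ρ ε t := fun U hU =>
  let ⟨_, hWs⟩ := h U hU
  ⟨_, hWs.subset, hWs.pairwise_disjoint, hWs.card_eq, hWs.sum_eBetween_le⟩

theorem Sparse.exists_disjoint_pair {α ρ ε : ℝ} (h : Sparse G α ρ ε 2) {U : Finset V}
    (hU : α * Fintype.card V ≤ #U) :
    ∃ W₁ W₂, W₁ ⊆ U ∧ W₂ ⊆ U ∧ Disjoint W₁ W₂ ∧ #W₁ = ⌈ρ * #U⌉₊ ∧ #W₂ = ⌈ρ * #U⌉₊ ∧
      (eBetween G W₁ W₂ : ℝ) ≤ ε * (⌈ρ * #U⌉₊ * ⌈ρ * #U⌉₊) := by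
  obtain ⟨Ws, hsub, hdisj, hcard, hden⟩ := h U hU
  refine ⟨Ws 0, Ws 1, hsub 0, hsub 1, hdisj (by decide), hcard 0, hcard 1, ?_⟩
  simpa [Fin.sum_univ_two, hcard] using hden

def HasBalancedSparseFamilies [DecidableEq V] (G : SimpleGraph V) (α ρ ε : ℝ) (k : ℕ) : Prop :=
  ∀ U Y : Finset V, ∀ s : ℕ, α * ρ * (2 / ρ) ^ k * Fintype.card V ≤ #U →
    s ≤ ⌈(ρ / 2) ^ k * #U⌉₊ →
    ∃ Ws : Fin (2 ^ k) → Finset V, IsSparseFamily G ε U s Ws ∧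
      #U * eBetween G (univ.biUnion Ws) Y ≤ 2 * #(univ.biUnion Ws) * eBetween G U Y

theorem hasBalancedSparseFamilies_zero [DecidableEq V] (α ρ ε : ℝ) :
    HasBalancedSparseFamilies G α ρ ε 0 := by
  intro U Y s _ hs
  simp only [pow_zero, one_mul, Nat.ceil_natCast] at hs ⊢
  obtain ⟨W, hWU, rfl, hWY⟩ := exists_subset_card_eq_mul_eBetween_le G Y hs
  have : Unique (Fin (2 ^ 0)) := inferInstanceAs (Unique (Fin 1))
  exact ⟨fun _ => W, isSparseFamily_unique G ε hWU, by simpa using hWY⟩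

end

section

variable {V : Type*} [Fintype V] [DecidableEq V] {G : SimpleGraph V} {α ρ ε : ℝ}

theorem Sparse.exists_isSparseFamily_two_pow_succ (hsp : Sparse G α ρ (ε / 4) 2) (hρ : 0 < ρ)
    (hρ1 : ρ ≤ 1) (hα : 0 ≤ α) {k : ℕ} (hk : HasBalancedSparseFamilies G α ρ ε k)
    {B : Finset V} {s : ℕ} (hB : α * (2 / ρ) ^ k * Fintype.card V ≤ #B)
    (hs : s ≤ ⌈(ρ / 2) ^ k * (ρ * #B)⌉₊) :
    ∃ Ws : Fin (2 ^ (k + 1)) → Finset V, IsSparseFamily G ε B s Ws := by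
  rcases Nat.eq_zero_or_pos s with rfl | hs0
  · exact ⟨_, isSparseFamily_empty G ε B⟩
  have hαB : α * Fintype.card V ≤ #B := by
    have : 1 ≤ (2 / ρ) ^ k := one_le_pow₀ ((one_le_div hρ).2 (by linarith))
    refine le_trans ?_ hB
    rw [mul_right_comm]
    exact le_mul_of_one_le_right (by positivity) this
  obtain ⟨W₁, W₂, hW₁, hW₂, hW₁₂, hc₁, hc₂, he⟩ := hsp.exists_disjoint_pair hαB
  set w := ⌈ρ * #B⌉₊
  have hw : α * ρ * (2 / ρ) ^ k * Fintype.card V ≤ w := by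
    calc α * ρ * (2 / ρ) ^ k * Fintype.card V = ρ * (α * (2 / ρ) ^ k * Fintype.card V) := by
          ring
      _ ≤ ρ * #B := by gcongr
      _ ≤ w := Nat.le_ceil _
  have hsw : s ≤ ⌈(ρ / 2) ^ k * w⌉₊ := hs.trans (Nat.ceil_mono (by gcongr; exact Nat.le_ceil _))
  obtain ⟨A, hA, hAY⟩ := hk W₁ W₂ s (hc₁ ▸ hw) (hc₁ ▸ hsw)
  obtain ⟨C, hC, hCY⟩ := hk W₂ (univ.biUnion A) s (hc₂ ▸ hw) (hc₂ ▸ hsw)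
  have hw0 : (0 : ℝ) < w := by
    have : w ≠ 0 := fun hw => by simp [hw] at hsw; omega
    positivity
  rw [hc₁, hA.card_biUnion] at hAY
  rw [hc₂, hC.card_biUnion, eBetween_comm G (univ.biUnion C), eBetween_comm G W₂] at hCY
  have hcross : (eBetween G (univ.biUnion A) (univ.biUnion C) : ℝ) ≤
      ε * Fintype.card (Fin (2 ^ k)) ^ 2 * s ^ 2 := by
    have := le_mul_sq_of_mul_le_mul_of_mul_le_mul (c := 2 * (Fintype.card (Fin (2 ^ k)) * s))
      (x := eBetween G (univ.biUnion A) (univ.biUnion C)) (y := eBetween G (univ.biUnion A) W₂)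
      hw0 (by positivity) (by exact_mod_cast hCY) (by exact_mod_cast hAY) he
    linarith
  let e : Fin (2 ^ (k + 1)) ≃ Fin (2 ^ k) ⊕ Fin (2 ^ k) :=
    (finCongr (Nat.two_pow_succ k)).trans finSumFinEquiv.symm
  exact ⟨_, ((hA.sumElim hC hW₁₂ hcross).mono (union_subset hW₁ hW₂)).comp_equiv e⟩

theorem HasBalancedSparseFamilies.succ (hsp : Sparse G α ρ (ε / 4) 2) (hρ : 0 < ρ)
    (hρ1 : ρ ≤ 1) (hα : 0 ≤ α) {k : ℕ} (hk : HasBalancedSparseFamilies G α ρ ε k) :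
    HasBalancedSparseFamilies G α ρ ε (k + 1) := by
  intro U Y s hU hs
  set L := lowDegreeSet G U Y
  have hUL : (#U : ℝ) ≤ 2 * #L := by exact_mod_cast card_le_two_mul_card_lowDegreeSet G U Y
  have hL : α * (2 / ρ) ^ k * Fintype.card V ≤ #L := by
    have : α * ρ * (2 / ρ) ^ (k + 1) * Fintype.card V =
        2 * (α * (2 / ρ) ^ k * Fintype.card V) := by
      rw [pow_succ]
      field_simp
    linarith
  have hsL : s ≤ ⌈(ρ / 2) ^ k * (ρ * #L)⌉₊ := by
    refine hs.trans (Nat.ceil_mono ?_)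
    calc (ρ / 2) ^ (k + 1) * #U = (ρ / 2) ^ k * (ρ / 2 * #U) := by ring
      _ ≤ (ρ / 2) ^ k * (ρ * #L) := mul_le_mul_of_nonneg_left (by nlinarith) (by positivity)
  obtain ⟨Ws, hWs⟩ := hsp.exists_isSparseFamily_two_pow_succ hρ hρ1 hα hk hL hsL
  exact ⟨Ws, hWs.mono (filter_subset _ _), card_mul_eBetween_le_of_subset_lowDegreeSet G
    (biUnion_subset.2 fun i _ => hWs.subset i)⟩

theorem Sparse.hasBalancedSparseFamilies (hsp : Sparse G α ρ (ε / 4) 2) (hρ : 0 < ρ)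
    (hρ1 : ρ ≤ 1) (hα : 0 ≤ α) (k : ℕ) : HasBalancedSparseFamilies G α ρ ε k := by
  induction k with
  | zero => exact hasBalancedSparseFamilies_zero α ρ ε
  | succ k ih => exact ih.succ hsp hρ hρ1 hα

end

theorem stmt_14_general {V : Type*} [Fintype V] (G : SimpleGraph V) (α ρ ε : ℝ)
    (hα : α ∈ Set.Icc (0 : ℝ) 1) (hρ : ρ ∈ Set.Icc (0 : ℝ) 1)
    (hsp : Sparse G α ρ (ε / 4) 2) (h : ℕ) (hh : 1 ≤ h) :
    Sparse G ((2 / ρ) ^ (h - 1) * α) ((2 : ℝ) ^ ((1 : ℤ) - h) * ρ ^ h) ε (2 ^ h) := by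
  classical
  obtain ⟨k, rfl⟩ : ∃ k, h = k + 1 := ⟨h - 1, by omega⟩
  refine sparse_of_forall_exists_isSparseFamily fun U hU => ?_
  rcases hρ.1.eq_or_lt with rfl | hρ0
  · simpa using ⟨_, isSparseFamily_empty G ε U⟩
  have hsize : (2 : ℝ) ^ ((1 : ℤ) - (k + 1 : ℕ)) * ρ ^ (k + 1) * #U =
      (ρ / 2) ^ k * (ρ * #U) := by
    rw [show (1 : ℤ) - (k + 1 : ℕ) = -k by push_cast; ring, zpow_neg, zpow_natCast, div_pow,
      pow_succ]
    ring
  rw [hsize]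
  refine hsp.exists_isSparseFamily_two_pow_succ hρ0 hρ.2 hα.1
    (hsp.hasBalancedSparseFamilies hρ0 hρ.2 hα.1 k) ?_ le_rfl
  simpa [mul_comm] using hU

/-- If a graph `G` is `(α, ρ, ε/4, 2)`-sparse, then for every positive integer `h`, `G` is
`((2/ρ)^{h-1} α, 2^{1-h} ρ^h, ε, 2^h)`-sparse. -/
theorem stmt_14 {V : Type*} [Fintype V] (G : SimpleGraph V) (α ρ ε : ℝ)
    (hα : α ∈ Set.Icc (0 : ℝ) 1) (hρ : ρ ∈ Set.Icc (0 : ℝ) 1) (hε : ε ∈ Set.Icc (0 : ℝ) 1)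
    (hsp : Sparse G α ρ (ε / 4) 2) (h : ℕ) (hh : 1 ≤ h) :
    Sparse G ((2 / ρ) ^ (h - 1) * α) ((2 : ℝ) ^ ((1 : ℤ) - h) * ρ ^ h) ε (2 ^ h) :=
  stmt_14_general G α ρ ε hα hρ hsp h hh
end

section
/- Let G be a graph and suppose every induced subgraph of G on at most 4t vertices has average degree less than 3. Then for every vertex subset S of G with |S| = t, the closure F(S) — obtained from S by repeatedly adding vertices outside the current set that have at least two neighbors inside it, until no such vertex remains — satisfies |F(S)| ≤ 4t. -/
/-!
Grow `S` one vertex at a time, always adding a vertex with two neighbours in the current set `T`.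
Each step adds one vertex and at least two edges, so `T` keeps the invariant
`2 |T| ≤ 2 |S| + e(T)`. At `|T| = 4t` this invariant says `2 e(T) ≥ 3 |T|`, which the sparseness
hypothesis forbids. So the process stops at a closed superset of `S` with at most `4t` vertices,
and `F(S)` is contained in it.
-/

/-- The closure `F(S)` of a vertex set `S`: the (unique) minimal superset `T` of `S` such that
no vertex outside `T` has at least two neighbors in `T`. It is obtained from `S` by repeatedly
adding vertices with at least two neighbors in the current set. -/
def closureF {V : Type*} (G : SimpleGraph V) (S : Set V) : Set V :=
  ⋂₀ {T : Set V | S ⊆ T ∧ ∀ v ∉ T, {u : V | u ∈ T ∧ G.Adj v u}.ncard ≤ 1}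

namespace SimpleGraph

variable {V : Type*} (G : SimpleGraph V)

def edgesWithin (s : Set V) : Set (Sym2 V) :=
  {e | e ∈ G.edgeSet ∧ ∀ v ∈ e, v ∈ s}

def IsTwoNeighbourClosed (s : Set V) : Prop :=
  ∀ v ∉ s, {u : V | u ∈ s ∧ G.Adj v u}.ncard ≤ 1

variable {G}

theorem closureF_subset {S T : Set V} (hST : S ⊆ T) (hT : G.IsTwoNeighbourClosed T) :
    closureF G S ⊆ T :=
  Set.sInter_subset_of_mem ⟨hST, hT⟩

theorem ncard_edgesWithin_add_ncard_le [Finite V] {s : Set V} {v : V} (hv : v ∉ s) :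
    (G.edgesWithin s).ncard + {u | u ∈ s ∧ G.Adj v u}.ncard ≤
      (G.edgesWithin (insert v s)).ncard := by
  set N := {u | u ∈ s ∧ G.Adj v u}
  have hdisj : Disjoint (G.edgesWithin s) ((fun u => s(v, u)) '' N) := by
    refine Set.disjoint_left.mpr ?_
    rintro _ ⟨-, hin⟩ ⟨u, -, rfl⟩
    exact hv (hin v (Sym2.mem_mk_left v u))
  have hsub : G.edgesWithin s ∪ (fun u => s(v, u)) '' N ⊆ G.edgesWithin (insert v s) := by
    rintro _ (⟨hE, hin⟩ | ⟨u, ⟨hu, hadj⟩, rfl⟩)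
    · exact ⟨hE, fun x hx => Set.mem_insert_of_mem v (hin x hx)⟩
    · refine ⟨hadj, fun x hx => ?_⟩
      rcases Sym2.mem_iff.mp hx with rfl | rfl
      exacts [Set.mem_insert x s, Set.mem_insert_of_mem v hu]
  calc (G.edgesWithin s).ncard + N.ncard
      = (G.edgesWithin s ∪ (fun u => s(v, u)) '' N).ncard := by
        rw [Set.ncard_union_eq hdisj, Set.ncard_image_of_injective N fun _ _ => Sym2.congr_right.mp]
    _ ≤ (G.edgesWithin (insert v s)).ncard := Set.ncard_le_ncard hsub

section Sparse

variable {t : ℕ}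
  (havg : ∀ s : Finset V, s.Nonempty → s.card ≤ 4 * t →
    2 * (G.edgesWithin s).ncard < 3 * s.card)
include havg

theorem card_lt_four_mul_of_two_mul_card_le {T : Finset V} (hT : T.Nonempty) (hTcard : T.card ≤ 4 * t)
    (hpot : 2 * T.card ≤ 2 * t + (G.edgesWithin T).ncard) :
    T.card < 4 * t := by
  have := havg T hT hTcard
  omega

theorem exists_isTwoNeighbourClosed_superset [Fintype V] (T : Finset V) (hTcard : T.card ≤ 4 * t)
    (hpot : 2 * T.card ≤ 2 * t + (G.edgesWithin T).ncard) :
    ∃ U : Finset V, T ⊆ U ∧ U.card ≤ 4 * t ∧ G.IsTwoNeighbourClosed U := by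
  classical
  induction hgap : 4 * t - T.card using Nat.strong_induction_on generalizing T with
  | _ gap ih =>
  by_cases hclosed : G.IsTwoNeighbourClosed T
  · exact ⟨T, subset_rfl, hTcard, hclosed⟩
  simp only [IsTwoNeighbourClosed, not_forall, not_le] at hclosed
  obtain ⟨v, hv, hN⟩ := hclosed
  have hT : T.Nonempty := by
    obtain ⟨u, hu, -⟩ := Set.nonempty_of_ncard_ne_zero (zero_lt_one.trans hN).ne'
    exact ⟨u, hu⟩
  have hlt := card_lt_four_mul_of_two_mul_card_le havg hT hTcard hpot
  have hvT : v ∉ T := by simpa using hv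
  have hcard : (insert v T).card = T.card + 1 := Finset.card_insert_of_notMem hvT
  have hedges := ncard_edgesWithin_add_ncard_le (G := G) hv
  rw [← Finset.coe_insert] at hedges
  obtain ⟨U, hTU, hU⟩ := ih (4 * t - (insert v T).card) (by omega) (insert v T) (by omega)
    (by omega) rfl
  exact ⟨U, (Finset.subset_insert v T).trans hTU, hU⟩

end Sparse

end SimpleGraph

/-- If every nonempty induced subgraph of `G` on at most `4t` vertices has average degree less
than `3`, then for every vertex subset `S` with `|S| = t` the closure `F(S)` has at most `4t`
vertices. -/
theorem stmt_16 {V : Type*} [Fintype V] (G : SimpleGraph V) (t : ℕ)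
    (havg : ∀ s : Finset V, s.Nonempty → s.card ≤ 4 * t →
      2 * {e : Sym2 V | e ∈ G.edgeSet ∧ ∀ v ∈ e, v ∈ s}.ncard < 3 * s.card)
    (S : Finset V) (hS : S.card = t) :
    (closureF G (S : Set V)).ncard ≤ 4 * t := by
  obtain ⟨T, hST, hTcard, hT⟩ :=
    SimpleGraph.exists_isTwoNeighbourClosed_superset havg S (by omega) (by omega)
  calc (closureF G (S : Set V)).ncard
      ≤ (T : Set V).ncard :=
        Set.ncard_le_ncard (SimpleGraph.closureF_subset (Finset.coe_subset.mpr hST) hT)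
    _ = T.card := Set.ncard_coe_finset T
    _ ≤ 4 * t := hTcard
end

section
/- Let G be a graph on n vertices with minimum degree at least 2, and let V_1 be the set of vertices of degree exactly 2 with x = |V_1|. If every vertex of V_1 has at most one neighbor in V_1, then the number of edges of G is at least max(3n/2 - x/2, 3x/2), and hence at least 9n/8. -/
/-- Let `G` be a graph on `n` vertices with minimum degree at least `2`, let `V₁` be the set of
vertices of degree exactly `2`, and let `x = |V₁|`. If every vertex of `V₁` has at most one
neighbor in `V₁`, then the number of edges of `G` is at least `max(3n/2 - x/2, 3x/2)`, and hence
at least `9n/8`. -/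
theorem stmt_19 {V : Type*} [Fintype V] (G : SimpleGraph V) (n x : ℕ)
    (hn : Fintype.card V = n)
    (hmin : ∀ v : V, 2 ≤ {u : V | G.Adj v u}.ncard)
    (hx : {v : V | {u : V | G.Adj v u}.ncard = 2}.ncard = x)
    (hind : ∀ v : V, {u : V | G.Adj v u}.ncard = 2 →
      {u : V | {w : V | G.Adj u w}.ncard = 2 ∧ G.Adj v u}.ncard ≤ 1) :
    max (3 * (n : ℝ) / 2 - x / 2) (3 * (x : ℝ) / 2) ≤ (G.edgeSet.ncard : ℝ) ∧
      9 * (n : ℝ) / 8 ≤ (G.edgeSet.ncard : ℝ) := by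
  classical
  have hdeg : ∀ v : V, {u : V | G.Adj v u}.ncard = G.degree v := by
    intro v
    rw [Set.ncard_eq_toFinset_card', Set.toFinset_setOf]
    simp [SimpleGraph.degree, SimpleGraph.neighborFinset_eq_filter]
  simp only [hdeg] at hmin hx hind
  set m := G.edgeFinset.card with hm
  have hE : G.edgeSet.ncard = m := by
    rw [Set.ncard_eq_toFinset_card']
    rw [hm]; congr 1
  -- the set of degree-2 vertices as a finset
  set S : Finset V := Finset.univ.filter (fun v => G.degree v = 2) with hS
  have hxS : S.card = x := by
    rw [← hx, Set.ncard_eq_toFinset_card', Set.toFinset_setOf]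
  have hsum : ∑ v, G.degree v = 2 * m := G.sum_degrees_eq_twice_card_edges
  -- First bound : 3n ≤ 2m + x
  have h1 : 3 * n ≤ 2 * m + x := by
    have hsplit : ∑ v ∈ S, G.degree v + ∑ v ∈ Finset.univ.filter (fun v => ¬ G.degree v = 2), G.degree v = 2 * m := by
      rw [Finset.sum_filter_add_sum_filter_not]; exact hsum
    have hcS : S.card + (Finset.univ.filter (fun v => ¬ G.degree v = 2)).card = n := by
      rw [← hn, ← Finset.card_univ]
      exact Finset.card_filter_add_card_filter_not _
    have hA : ∑ v ∈ S, G.degree v = 2 * S.card := by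
      rw [Finset.sum_congr rfl (fun v hv => (Finset.mem_filter.mp hv).2), Finset.sum_const,
        smul_eq_mul, mul_comm]
    have hB : (Finset.univ.filter (fun v => ¬ G.degree v = 2)).card * 3 ≤
        ∑ v ∈ Finset.univ.filter (fun v => ¬ G.degree v = 2), G.degree v := by
      rw [← Finset.sum_const_nat (m := 3) (fun _ _ => rfl)]
      apply Finset.sum_le_sum
      intro v hv
      have h2 := hmin v
      have h3 := (Finset.mem_filter.mp hv).2
      omega
    omega
  -- Second bound : 3x ≤ 2m
  have h2 : 3 * x ≤ 2 * m := by
    set A : Finset (V × V) :=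
      Finset.univ.filter (fun p => G.Adj p.1 p.2 ∧ G.degree p.1 = 2) with hA
    set A₁ : Finset (V × V) :=
      Finset.univ.filter (fun p => G.Adj p.1 p.2 ∧ G.degree p.1 = 2 ∧ G.degree p.2 = 2) with hA₁
    set I : Finset (Sym2 V) := A.image (fun p => s(p.1, p.2)) with hI
    -- |A| = 2x
    have hAcard : A.card = 2 * x := by
      rw [Finset.card_eq_sum_card_fiberwise (f := fun p => p.1) (t := S)
        (fun p hp => by
          simp only [Finset.mem_coe, hA, Finset.mem_filter, Finset.mem_univ, true_and] at hp
          simp [hS, hp.2])]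
      have hfib : ∀ v ∈ S, (A.filter (fun p => p.1 = v)).card = 2 := by
        intro v hv
        have hv2 : G.degree v = 2 := (Finset.mem_filter.mp hv).2
        rw [← hv2, SimpleGraph.degree, SimpleGraph.neighborFinset_eq_filter]
        apply Finset.card_bij (fun p _ => p.2)
        · intro p hp
          simp only [hA, Finset.mem_filter, Finset.mem_univ, true_and] at hp
          cases hp.2
          simp [hp.1.1]
        · intro p hp q hq hpq
          simp only [hA, Finset.mem_filter, Finset.mem_univ, true_and] at hp hq
          exact Prod.ext (hp.2.trans hq.2.symm) hpq
        · intro u hu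
          simp only [Finset.mem_filter, Finset.mem_univ, true_and] at hu
          exact ⟨(v, u), by simp [hA, hu, hv2], rfl⟩
      rw [Finset.sum_congr rfl hfib, Finset.sum_const, smul_eq_mul, hxS, mul_comm]
    -- |A₁| ≤ x
    have hA₁card : A₁.card ≤ x := by
      rw [Finset.card_eq_sum_card_fiberwise (f := fun p => p.1) (t := S)
        (fun p hp => by
          simp only [Finset.mem_coe, hA₁, Finset.mem_filter, Finset.mem_univ, true_and] at hp
          simp [hS, hp.2.1])]
      calc ∑ v ∈ S, (A₁.filter (fun p => p.1 = v)).card ≤ ∑ v ∈ S, 1 := by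
            apply Finset.sum_le_sum
            intro v hv
            have hv2 : G.degree v = 2 := (Finset.mem_filter.mp hv).2
            have := hind v hv2
            rw [Set.ncard_eq_toFinset_card', Set.toFinset_setOf] at this
            calc (A₁.filter (fun p => p.1 = v)).card
                ≤ (Finset.univ.filter (fun u => G.degree u = 2 ∧ G.Adj v u)).card := by
                  apply Finset.card_le_card_of_injOn (fun p => p.2)
                  · intro p hp
                    simp only [Finset.mem_coe, hA₁, Finset.mem_filter, Finset.mem_univ, true_and] at hp
                    obtain ⟨⟨hadj, _, hd2⟩, hp1⟩ := hp
                    subst hp1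
                    simp [hd2, hadj]
                  · intro p hp q hq hpq
                    rw [Finset.mem_coe] at hp hq
                    simp only [hA₁, Finset.mem_filter, Finset.mem_univ, true_and] at hp hq
                    exact Prod.ext (hp.2.trans hq.2.symm) hpq
              _ ≤ 1 := this
        _ = x := by rw [Finset.sum_const, smul_eq_mul, mul_one, hxS]
    -- |I| ≤ m
    have hIm : I.card ≤ m := by
      apply Finset.card_le_card
      intro e he
      simp only [hI, Finset.mem_image] at he
      obtain ⟨p, hp, rfl⟩ := he
      simp only [hA, Finset.mem_filter, Finset.mem_univ, true_and] at hp
      rw [SimpleGraph.mem_edgeFinset, SimpleGraph.mem_edgeSet]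
      exact hp.1
    -- fiberwise sums over I
    have hAfib : A.card = ∑ e ∈ I, (A.filter (fun p => s(p.1, p.2) = e)).card :=
      Finset.card_eq_sum_card_fiberwise (fun p hp => Finset.mem_image_of_mem _ hp)
    have hA₁fib : A₁.card = ∑ e ∈ I, (A₁.filter (fun p => s(p.1, p.2) = e)).card := by
      apply Finset.card_eq_sum_card_fiberwise
      intro p hp
      apply Finset.mem_image_of_mem
      simp only [Finset.mem_coe, hA₁, Finset.mem_filter, Finset.mem_univ, true_and] at hp
      simp [hA, hp.1, hp.2.1]
    -- pointwise bound
    have hpt : ∀ e ∈ I, 2 * (A.filter (fun p => s(p.1, p.2) = e)).card ≤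
        2 + (A₁.filter (fun p => s(p.1, p.2) = e)).card := by
      intro e he
      simp only [hI, Finset.mem_image] at he
      obtain ⟨⟨a, b⟩, hpA, rfl⟩ := he
      dsimp only
      simp only [hA, Finset.mem_filter, Finset.mem_univ, true_and] at hpA
      obtain ⟨hab, hda⟩ := hpA
      have hne : a ≠ b := G.ne_of_adj hab
      have hsub : A.filter (fun p => s(p.1, p.2) = s(a, b)) ⊆ {(a, b), (b, a)} := by
        intro q hq
        simp only [Finset.mem_filter] at hq
        have := hq.2
        rw [Sym2.eq_iff] at this
        rcases this with ⟨h1, h2⟩ | ⟨h1, h2⟩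
        · simp [Prod.ext_iff, h1, h2]
        · simp [Prod.ext_iff, h1, h2]
      by_cases hba : (b, a) ∈ A
      · -- both directions present: degrees of a and b are both 2
        have hdb : G.degree b = 2 := by
          simp only [hA, Finset.mem_filter, Finset.mem_univ, true_and] at hba
          exact hba.2
        have hsub2 : ({(a, b), (b, a)} : Finset (V × V)) ⊆
            A₁.filter (fun p => s(p.1, p.2) = s(a, b)) := by
          intro q hq
          simp only [Finset.mem_insert, Finset.mem_singleton] at hq
          rcases hq with rfl | rfl
          · simp [hA₁, hab, hda, hdb]
          · simp [hA₁, hab.symm, hda, hdb, Sym2.eq_swap]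
        have c1 : (A.filter (fun p => s(p.1, p.2) = s(a, b))).card ≤ 2 := by
          calc _ ≤ ({(a, b), (b, a)} : Finset (V × V)).card := Finset.card_le_card hsub
            _ ≤ 2 := Finset.card_insert_le _ _ |>.trans (by simp)
        have c2 : 2 ≤ (A₁.filter (fun p => s(p.1, p.2) = s(a, b))).card := by
          calc (2 : ℕ) = ({(a, b), (b, a)} : Finset (V × V)).card := by
                rw [Finset.card_insert_of_notMem (by simp [Prod.ext_iff, hne]),
                  Finset.card_singleton]
            _ ≤ _ := Finset.card_le_card hsub2
        omega
      · -- only (a,b): fiber has ≤ 1 element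
        have c1 : (A.filter (fun p => s(p.1, p.2) = s(a, b))).card ≤ 1 := by
          apply Finset.card_le_one.mpr
          intro p hp q hq
          have hp' := hsub hp
          have hq' := hsub hq
          simp only [Finset.mem_insert, Finset.mem_singleton] at hp' hq'
          have hpA' := (Finset.mem_filter.mp hp).1
          have hqA' := (Finset.mem_filter.mp hq).1
          rcases hp' with rfl | rfl
          · rcases hq' with rfl | rfl
            · rfl
            · exact absurd hqA' hba
          · exact absurd hpA' hba
        omega
    have hkey : 2 * A.card ≤ 2 * I.card + A₁.card := by
      rw [hAfib, hA₁fib, Finset.mul_sum]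
      calc ∑ e ∈ I, 2 * (A.filter (fun p => s(p.1, p.2) = e)).card
          ≤ ∑ e ∈ I, (2 + (A₁.filter (fun p => s(p.1, p.2) = e)).card) :=
            Finset.sum_le_sum hpt
        _ = 2 * I.card + ∑ e ∈ I, (A₁.filter (fun p => s(p.1, p.2) = e)).card := by
            rw [Finset.sum_add_distrib, Finset.sum_const, smul_eq_mul, mul_comm]
    omega
  -- conclude with real arithmetic
  rw [hE]
  have h1' : 3 * (n : ℝ) ≤ 2 * m + x := by exact_mod_cast h1
  have h2' : 3 * (x : ℝ) ≤ 2 * m := by exact_mod_cast h2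
  constructor
  · apply max_le <;> linarith
  · linarith
end
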